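/- arXiv:2401.00181 — 4 statements merged into one kernel-verified Lean document; each statement's English description precedes it below -/
import Mathlib

section
/- Let p be an odd prime and L/K a finite cyclic extension of number fields of p-power degree. Then Norm_{L/K}(μ_L) = μ_K if and only if either the Sylow p-subgroup μ_{K,p} of μ_K is trivial or L = K(μ_{L,p}), where μ_{L,p} denotes the Sylow p-subgroup of μ_L. -/
open Subgroup NumberField IntermediateField



section Generic
variable {G : Type*} [Group G]

lemma aux_finite_of_le {H T : Subgroup G} [Finite T] (h : H ≤ T) : Finite H :=
  Finite.of_injective (fun x => (⟨x.1, h x.2⟩ : T))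
    (fun a b hab => Subtype.ext (congrArg Subtype.val hab : _))

lemma aux_zpow_eq_pow (g : G) (hg : orderOf g ≠ 0) (k : ℤ) :
    ∃ t : ℕ, t < orderOf g ∧ g ^ t = g ^ k := by
  refine ⟨(k % (orderOf g : ℤ)).toNat, ?_, ?_⟩
  · have h1 : 0 < (orderOf g : ℤ) := by positivity
    have := Int.emod_lt_of_pos k h1
    omega
  · have h1 : 0 < (orderOf g : ℤ) := by positivity
    have h0 : 0 ≤ k % (orderOf g : ℤ) := Int.emod_nonneg k (by positivity)
    rw [← zpow_natCast, Int.toNat_of_nonneg h0, zpow_mod_orderOf]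

lemma aux_mem_zpowers_pow_iff {g : G} (hg : orderOf g ≠ 0) (s t : ℕ) :
    g ^ t ∈ zpowers (g ^ s) ↔ Nat.gcd s (orderOf g) ∣ t := by
  constructor
  · rintro ⟨k, hk⟩
    have : ((g ^ s) ^ k) = g ^ ((s : ℤ) * k) := by
      rw [← zpow_natCast g s, ← zpow_mul]
    simp only [] at hk
    rw [this] at hk
    have h2 : g ^ ((s : ℤ) * k) = g ^ (t : ℤ) := by rw [hk, zpow_natCast]
    rw [zpow_eq_zpow_iff_modEq] at h2
    have h3 : (orderOf g : ℤ) ∣ (s * k - t) := Int.ModEq.dvd h2.symm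
    have h4 : (Nat.gcd s (orderOf g) : ℤ) ∣ t := by
      have hd1 : (Nat.gcd s (orderOf g) : ℤ) ∣ (s : ℤ) := Int.natCast_dvd_natCast.2 (Nat.gcd_dvd_left _ _)
      have hd2 : (Nat.gcd s (orderOf g) : ℤ) ∣ (orderOf g : ℤ) := Int.natCast_dvd_natCast.2 (Nat.gcd_dvd_right _ _)
      have : (Nat.gcd s (orderOf g) : ℤ) ∣ (s * k - t) := hd2.trans h3
      have h5 : (Nat.gcd s (orderOf g) : ℤ) ∣ (s : ℤ) * k := hd1.mul_right k
      have h6 := h5.sub this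
      rwa [sub_sub_cancel] at h6
    exact_mod_cast h4
  · rintro ⟨w, hw⟩
    have hb : (Nat.gcd s (orderOf g) : ℤ) = Nat.gcdA s (orderOf g) * s + Nat.gcdB s (orderOf g) * orderOf g := by
      rw [Nat.gcd_eq_gcd_ab]; ring
    refine ⟨Nat.gcdA s (orderOf g) * w, ?_⟩
    have : ((g ^ s) ^ (Nat.gcdA s (orderOf g) * w) : G) = g ^ ((s : ℤ) * (Nat.gcdA s (orderOf g) * w)) := by
      rw [← zpow_natCast g s, ← zpow_mul]
    show (g^s) ^ (Nat.gcdA s (orderOf g) * w) = g ^ t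
    rw [this]
    have ht : (t : ℤ) = (s : ℤ) * (Nat.gcdA s (orderOf g) * w) + (orderOf g) * (Nat.gcdB s (orderOf g) * w) := by
      have : (t : ℤ) = (Nat.gcd s (orderOf g) : ℤ) * w := by exact_mod_cast congrArg (Nat.cast : ℕ → ℤ) hw
      rw [this, hb]; ring
    rw [← zpow_natCast g t, ht, zpow_add, zpow_mul g (orderOf g : ℤ), zpow_natCast g (orderOf g), pow_orderOf_eq_one, one_zpow, mul_one]

end Generic



lemma aux_torsion_finite (K : Type*) [Field K] [NumberField K] :
    Finite (CommGroup.torsion Kˣ) := by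
  have key : ∀ x : CommGroup.torsion Kˣ, ∃ y : Units.torsion K,
      (algebraMap (𝓞 K) K (y.val : 𝓞 K)) = ((x.val : Kˣ) : K) := by
    intro x
    obtain ⟨n, hn, hxn⟩ := isOfFinOrder_iff_pow_eq_one.mp x.2
    have hxnK : ((x.val : Kˣ) : K) ^ n = 1 := by
      rw [← Units.val_pow_eq_pow_val, hxn, Units.val_one]
    have hinvK : (((x.val)⁻¹ : Kˣ) : K) ^ n = 1 := by
      have : ((x.val)⁻¹ : Kˣ) ^ n = 1 := by rw [inv_pow, hxn, inv_one]
      rw [← Units.val_pow_eq_pow_val, this, Units.val_one]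
    have ha : IsIntegral ℤ ((x.val : Kˣ) : K) := by
      refine IsIntegral.of_pow hn ?_
      rw [hxnK]; exact isIntegral_one
    have hb : IsIntegral ℤ (((x.val)⁻¹ : Kˣ) : K) := by
      refine IsIntegral.of_pow hn ?_
      rw [hinvK]; exact isIntegral_one
    set A : 𝓞 K := ⟨_, ha⟩
    set B : 𝓞 K := ⟨_, hb⟩
    have hAB : A * B = 1 := by
      refine NumberField.RingOfIntegers.ext ?_
      show ((x.val : Kˣ) : K) * (((x.val)⁻¹ : Kˣ) : K) = (1 : K)
      exact Units.mul_inv _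
    have hBA : B * A = 1 := by rw [mul_comm]; exact hAB
    refine ⟨⟨⟨A, B, hAB, hBA⟩, ?_⟩, rfl⟩
    rw [Units.torsion, CommGroup.mem_torsion, isOfFinOrder_iff_pow_eq_one]
    refine ⟨n, hn, ?_⟩
    refine Units.ext ?_
    have h1 : ((⟨A, B, hAB, hBA⟩ : (𝓞 K)ˣ) ^ n).val = A ^ n := by
      rw [Units.val_pow_eq_pow_val]
    rw [h1, Units.val_one]
    refine NumberField.RingOfIntegers.ext ?_
    show ((x.val : Kˣ) : K) ^ n = (1 : K)
    exact hxnK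
  choose f hf using key
  have hinj : Function.Injective f := by
    intro a b hab
    have : ((a.val : Kˣ) : K) = ((b.val : Kˣ) : K) := by rw [← hf a, ← hf b, hab]
    exact Subtype.ext (Units.ext this)
  exact Finite.of_injective f hinj

lemma aux_decomp {G : Type*} [CommGroup G] (p : ℕ) [hp : Fact p.Prime] {x : G}
    (hx : IsOfFinOrder x) :
    ∃ y z : G, x = y * z ∧ y ∈ Subgroup.zpowers x ∧ z ∈ Subgroup.zpowers x ∧
      (∃ i : ℕ, orderOf y = p ^ i) ∧ Nat.Coprime (orderOf z) p := by
  set n := orderOf x with hn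
  have hn0 : n ≠ 0 := hx.orderOf_pos.ne'
  set k := n.factorization p with hk
  set t := n / p ^ k with ht
  have hnt : p ^ k * t = n := Nat.ordProj_mul_ordCompl_eq_self n p
  have hco : Nat.Coprime p t := Nat.coprime_ordCompl hp.out hn0
  have hco2 : Nat.Coprime (p ^ k) t := hco.pow_left k
  have hizco : IsCoprime ((p ^ k : ℕ) : ℤ) ((t : ℕ) : ℤ) := by
    rw [Nat.isCoprime_iff_coprime]; exact hco2
  obtain ⟨u, v, huv⟩ := hizco
  refine ⟨x ^ (v * t), x ^ (u * p ^ k), ?_, zpow_mem (mem_zpowers x) _,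
    zpow_mem (mem_zpowers x) _, ?_, ?_⟩
  · rw [← zpow_add]
    have : v * t + u * p ^ k = 1 := by rw [add_comm] at huv ⊢; push_cast at huv ⊢; linarith
    rw [this, zpow_one]
  · have hy : (x ^ (v * t)) ^ (p ^ k) = 1 := by
      rw [← zpow_natCast (x ^ (v * t)), ← zpow_mul]
      have h1 : v * (t:ℤ) * ((p ^ k : ℕ):ℤ) = (n:ℤ) * v := by rw [← hnt]; push_cast; ring
      rw [h1, zpow_mul, zpow_natCast, pow_orderOf_eq_one, one_zpow]
    have := orderOf_dvd_of_pow_eq_one hy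
    obtain ⟨i, _, hi⟩ := (Nat.dvd_prime_pow hp.out).1 this
    exact ⟨i, hi⟩
  · have hz : (x ^ (u * p ^ k)) ^ t = 1 := by
      rw [← zpow_natCast (x ^ (u * p ^ k)), ← zpow_mul]
      have h2 : u * (p:ℤ) ^ k * (t:ℤ) = (n:ℤ) * u := by rw [← hnt]; push_cast; ring
      rw [h2, zpow_mul, zpow_natCast, pow_orderOf_eq_one, one_zpow]
    exact Nat.Coprime.coprime_dvd_left (orderOf_dvd_of_pow_eq_one hz) hco.symm



lemma aux_finord {G : Type*} [Group G] {x : G} (h : orderOf x ≠ 0) : IsOfFinOrder x := by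
  by_contra hf
  exact h (orderOf_eq_zero hf)

section ClaimA

variable (p : ℕ) [Fact p.Prime] (K L : Type) [Field K] [Field L]
  [Algebra K L] [FiniteDimensional K L]

-- provisional: uses aux_decomp from b.lean; inline here for testing
lemma claimA {m : ℕ} (hdeg : Module.finrank K L = p ^ m) :
    Subgroup.map (Units.map (Algebra.norm K : L →* K)) (CommGroup.torsion Lˣ)
        = CommGroup.torsion Kˣ ↔
      CommGroup.primaryComponent Kˣ p ≤
        Subgroup.map (Units.map (Algebra.norm K : L →* K)) (CommGroup.primaryComponent Lˣ p) := by
  set N : Lˣ →* Kˣ := Units.map (Algebra.norm K : L →* K) with hN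
  have hNle : Subgroup.map N (CommGroup.torsion Lˣ) ≤ CommGroup.torsion Kˣ := by
    rintro _ ⟨y, hy, rfl⟩
    exact (CommGroup.mem_torsion _).mpr (MonoidHom.isOfFinOrder N ((CommGroup.mem_torsion _).mp hy))
  constructor
  · intro h x hx
    obtain ⟨r, hr⟩ := hx
    have hxfin : IsOfFinOrder x := isOfFinOrder_iff_pow_eq_one.mpr ⟨p ^ r, pow_pos (Nat.Prime.pos Fact.out) r, hr⟩
    have hxmem : x ∈ Subgroup.map N (CommGroup.torsion Lˣ) := by
      rw [h]; exact (CommGroup.mem_torsion _).mpr hxfin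
    obtain ⟨y, hyt, hyx⟩ := hxmem
    have hytf : IsOfFinOrder y := (CommGroup.mem_torsion _).mp hyt
    obtain ⟨y1, y2, hsplit, hy1m, hy2m, ⟨i, hi⟩, hcop⟩ := aux_decomp p hytf
    have hu1 : N y2 = 1 := by
      have hd2 : Nat.Coprime (orderOf (N y2)) p :=
        Nat.Coprime.coprime_dvd_left (orderOf_map_dvd N y2) hcop
      have hx12 : x = N y1 * N y2 := by rw [← hyx, hsplit, map_mul]
      have hNy2eq : N y2 = (N y1)⁻¹ * x := by rw [hx12]; group
      have hdvd : orderOf (N y2) ∣ p ^ i * p ^ r := by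
        rw [hNy2eq]
        refine dvd_trans (Commute.orderOf_mul_dvd_lcm (Commute.all _ _)) ?_
        refine Nat.lcm_dvd ?_ ?_
        · rw [orderOf_inv]
          exact dvd_trans ((orderOf_map_dvd N y1).trans (by rw [hi])) (dvd_mul_right _ _)
        · exact (orderOf_dvd_of_pow_eq_one hr).trans (dvd_mul_left _ _)
      have : orderOf (N y2) = 1 := by
        refine Nat.Coprime.eq_one_of_dvd ?_ hdvd
        rw [← pow_add]
        exact hd2.pow_right _
      rwa [orderOf_eq_one_iff] at this
    refine ⟨y1, ⟨i, by rw [← hi]; exact pow_orderOf_eq_one _⟩, ?_⟩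
    rw [← hyx, hsplit, map_mul, hu1, mul_one]
  · intro h
    refine le_antisymm hNle ?_
    intro x hx
    have hxfin : IsOfFinOrder x := (CommGroup.mem_torsion _).mp hx
    obtain ⟨x1, x2, hsplit, hx1m, hx2m, ⟨i, hi⟩, hcop⟩ := aux_decomp p hxfin
    obtain ⟨y1, hy1p, hy1⟩ := h (show x1 ∈ CommGroup.primaryComponent Kˣ p from ⟨i, by rw [← hi]; exact pow_orderOf_eq_one _⟩)
    set ι : Kˣ →* Lˣ := Units.map (algebraMap K L).toMonoidHom with hι
    have hNι : ∀ u : Kˣ, N (ι u) = u ^ (p ^ m) := by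
      intro u
      refine Units.ext ?_
      show Algebra.norm K (algebraMap K L (u : K)) = ((u ^ (p ^ m) : Kˣ) : K)
      rw [Algebra.norm_algebraMap, hdeg, Units.val_pow_eq_pow_val]
    set t := orderOf x2 with hts
    have hx2fin : IsOfFinOrder x2 := by
      obtain ⟨k, rfl⟩ := hx2m
      exact hxfin.zpow
    have ht0 : t ≠ 0 := hx2fin.orderOf_pos.ne'
    have hco2 : Nat.Coprime (p ^ m) t := (hcop.symm.pow_left m)
    obtain ⟨u, v, huv⟩ : IsCoprime ((p ^ m : ℕ) : ℤ) ((t : ℕ) : ℤ) := by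
      rw [Nat.isCoprime_iff_coprime]; exact hco2
    have hx2t : x2 ^ ((t : ℕ) : ℤ) = 1 := by
      rw [zpow_natCast]; exact pow_orderOf_eq_one x2
    have hcalc : N ((ι x2) ^ u) = x2 := by
      rw [map_zpow, hNι]
      have h1 : (x2 ^ (p ^ m)) ^ u = x2 ^ (((p ^ m : ℕ) : ℤ) * u) := by
        rw [zpow_mul, zpow_natCast]
      rw [h1]
      have h2 : ((p ^ m : ℕ) : ℤ) * u = 1 - v * (t : ℤ) := by linarith [huv]
      rw [h2, zpow_sub, zpow_one, mul_comm v (t:ℤ), zpow_mul, hx2t, one_zpow, inv_one, mul_one]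
    have hy1fin : IsOfFinOrder y1 := by
      obtain ⟨j, hj⟩ := hy1p
      exact isOfFinOrder_iff_pow_eq_one.mpr ⟨p ^ j, pow_pos (Nat.Prime.pos Fact.out) j, hj⟩
    have hιx2fin : IsOfFinOrder ((ι x2) ^ u) :=
      (MonoidHom.isOfFinOrder ι hx2fin).zpow
    refine ⟨y1 * (ι x2) ^ u, ?_, ?_⟩
    · exact Subgroup.mul_mem _ ((CommGroup.mem_torsion _).mpr hy1fin)
        ((CommGroup.mem_torsion _).mpr hιx2fin)
    · rw [map_mul, hy1, hcalc, ← hsplit]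

end ClaimA



lemma aux_gcd_dvd_pow {p : ℕ} (hp : p.Prime) {m b T : ℕ} (hTm : p ^ m ∣ T)
    (hTm1 : ¬ p ^ (m + 1) ∣ T) : Nat.gcd T (p ^ b) = p ^ min m b := by
  refine Nat.dvd_antisymm ?_ (Nat.dvd_gcd ((pow_dvd_pow p (min_le_left _ _)).trans hTm)
    (pow_dvd_pow p (min_le_right _ _)))
  obtain ⟨j, hjb, hj⟩ := (Nat.dvd_prime_pow hp).1 (Nat.gcd_dvd_right T (p ^ b))
  rw [hj]
  have hjT : p ^ j ∣ T := hj ▸ Nat.gcd_dvd_left _ _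
  have hjm : j ≤ m := by
    by_contra hc
    exact hTm1 ((pow_dvd_pow p (by omega)).trans hjT)
  exact pow_dvd_pow p (le_min hjm hjb)

section Fields

variable {K L : Type} [Field K] [Field L] [Algebra K L]

lemma aux_fixed_pow {σ : L ≃ₐ[K] L} {x : L} (hx : σ x = x) (n : ℕ) : (σ ^ n) x = x := by
  induction n with
  | zero => rfl
  | succ n ih => rw [pow_succ, AlgEquiv.mul_apply, hx, ih]

lemma aux_fixed_zpow {σ : L ≃ₐ[K] L} {x : L} (hx : σ x = x) (k : ℤ) : (σ ^ k) x = x := by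
  cases k with
  | ofNat n => rw [Int.ofNat_eq_coe, zpow_natCast]; exact aux_fixed_pow hx n
  | negSucc n =>
    rw [zpow_negSucc]
    have h1 : (σ ^ (n + 1)) x = x := aux_fixed_pow hx (n + 1)
    have h2 : (σ ^ (n + 1))⁻¹ ((σ ^ (n + 1)) x) = x := by
      rw [← AlgEquiv.mul_apply, inv_mul_cancel, AlgEquiv.one_apply]
    rw [h1] at h2
    exact h2

lemma aux_fixed_all {σ0 : L ≃ₐ[K] L} (hσ0 : ∀ τ : L ≃ₐ[K] L, τ ∈ Subgroup.zpowers σ0)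
    {x : L} (hx : σ0 x = x) : ∀ τ : L ≃ₐ[K] L, τ x = x := by
  intro τ
  obtain ⟨k, rfl⟩ := hσ0 τ
  exact aux_fixed_zpow hx k

lemma aux_fixed_mem_range [FiniteDimensional K L] [IsGalois K L] {x : L}
    (hx : ∀ τ : L ≃ₐ[K] L, τ x = x) : ∃ y : K, algebraMap K L y = x := by
  have h1 : IntermediateField.fixedField (⊤ : Subgroup (L ≃ₐ[K] L)) = ⊥ := by
    have h2 : IntermediateField.fixingSubgroup (⊥ : IntermediateField K L) = ⊤ :=
      IntermediateField.fixingSubgroup_bot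
    rw [← h2, IsGalois.fixedField_fixingSubgroup]
  have h3 : x ∈ IntermediateField.fixedField (⊤ : Subgroup (L ≃ₐ[K] L)) := by
    rintro ⟨g, -⟩
    exact hx g
  rw [h1, IntermediateField.mem_bot] at h3
  exact h3

lemma aux_fixedField_bot [FiniteDimensional K L] :
    IntermediateField.fixedField (⊥ : Subgroup (L ≃ₐ[K] L)) = ⊤ := by
  refine eq_top_iff.mpr ?_
  rintro x -
  rintro ⟨g, hg⟩
  rw [Subgroup.mem_bot] at hg
  subst hg
  rfl

lemma aux_adjoin_top_iff [FiniteDimensional K L] [IsGalois K L] (z : L) :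
    IntermediateField.adjoin K {z} = ⊤ ↔ ∀ σ : L ≃ₐ[K] L, σ z = z → σ = 1 := by
  constructor
  · intro h σ hσ
    refine AlgEquiv.ext fun x => ?_
    have hxmem : x ∈ IntermediateField.adjoin K {z} := by rw [h]; trivial
    have hle : IntermediateField.adjoin K {z} ≤
        IntermediateField.fixedField (Subgroup.zpowers σ) := by
      rw [IntermediateField.adjoin_le_iff]
      rintro y hy
      rw [Set.mem_singleton_iff] at hy
      subst hy
      rintro ⟨g, hg⟩
      obtain ⟨k, rfl⟩ := hg
      exact aux_fixed_zpow hσ k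
    exact hle hxmem ⟨σ, Subgroup.mem_zpowers σ⟩
  · intro h
    have hfix : IntermediateField.fixingSubgroup (IntermediateField.adjoin K {z}) = ⊥ := by
      refine (Subgroup.eq_bot_iff_forall _).mpr fun σ hσ => ?_
      refine h σ ?_
      exact hσ ⟨z, IntermediateField.mem_adjoin_simple_self K z⟩
    have := IsGalois.fixedField_fixingSubgroup (IntermediateField.adjoin K {z})
    rw [hfix, aux_fixedField_bot] at this
    exact this.symm

end Fields



set_option maxHeartbeats 2000000 in
lemma claimB (p : ℕ) [hpf : Fact p.Prime] (hodd : p ≠ 2)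
    (K L : Type) [Field K] [Field L] [NumberField K] [NumberField L]
    [Algebra K L] [IsGalois K L] [FiniteDimensional K L]
    (hcyc : IsCyclic (L ≃ₐ[K] L)) {m : ℕ} (hdeg : Module.finrank K L = p ^ m) :
    (CommGroup.primaryComponent Kˣ p ≤
        Subgroup.map (Units.map (Algebra.norm K : L →* K)) (CommGroup.primaryComponent Lˣ p)) ↔
      (CommGroup.primaryComponent Kˣ p = ⊥ ∨
        IntermediateField.adjoin K
          (Units.val '' ((CommGroup.primaryComponent Lˣ p : Subgroup Lˣ) : Set Lˣ)) = ⊤) := by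
  have hp := hpf.out
  set N : Lˣ →* Kˣ := Units.map (Algebra.norm K : L →* K) with hN
  set ι : Kˣ →* Lˣ := Units.map (algebraMap K L).toMonoidHom with hι
  have hι_inj : Function.Injective ι := Units.map_injective (algebraMap K L).injective
  have hιval : ∀ u : Kˣ, ((ι u : Lˣ) : L) = algebraMap K L (u : K) := fun u => rfl
  haveI hfinL : Finite (CommGroup.torsion Lˣ) := aux_torsion_finite L
  haveI hfinK : Finite (CommGroup.torsion Kˣ) := aux_torsion_finite K
  have hleL : CommGroup.primaryComponent Lˣ p ≤ CommGroup.torsion Lˣ := by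
    rintro x ⟨n, hn⟩
    exact isOfFinOrder_iff_pow_eq_one.mpr ⟨p ^ n, pow_pos hp.pos n, hn⟩
  have hleK : CommGroup.primaryComponent Kˣ p ≤ CommGroup.torsion Kˣ := by
    rintro x ⟨n, hn⟩
    exact isOfFinOrder_iff_pow_eq_one.mpr ⟨p ^ n, pow_pos hp.pos n, hn⟩
  haveI : Finite (CommGroup.primaryComponent Lˣ p) := aux_finite_of_le hleL
  haveI : Finite (CommGroup.primaryComponent Kˣ p) := aux_finite_of_le hleK
  obtain ⟨g, hg⟩ := IsCyclic.exists_generator (α := CommGroup.primaryComponent Lˣ p)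
  set ζ : Lˣ := (g : Lˣ) with hζdef
  have hζmem : ζ ∈ CommGroup.primaryComponent Lˣ p := g.2
  obtain ⟨b, hb⟩ : ∃ n : ℕ, orderOf ζ = p ^ n := by
    obtain ⟨n, hn⟩ := g.2
    obtain ⟨k, -, hk⟩ := (Nat.dvd_prime_pow hp).1 (orderOf_dvd_of_pow_eq_one hn)
    exact ⟨k, hk⟩
  have hbne : orderOf ζ ≠ 0 := by rw [hb]; exact (pow_pos hp.pos b).ne'
  have hμzp : (CommGroup.primaryComponent Lˣ p : Subgroup Lˣ) = Subgroup.zpowers ζ := by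
    refine le_antisymm ?_ ((Subgroup.zpowers_le).mpr hζmem)
    intro x hx
    obtain ⟨k, hk⟩ := hg ⟨x, hx⟩
    exact ⟨k, by simpa using congrArg Subtype.val hk⟩
  have hadj : IntermediateField.adjoin K
      (Units.val '' ((CommGroup.primaryComponent Lˣ p : Subgroup Lˣ) : Set Lˣ))
      = IntermediateField.adjoin K {(ζ : L)} := by
    refine le_antisymm ?_ ?_
    · rw [IntermediateField.adjoin_le_iff]
      rintro _ ⟨x, hx, rfl⟩
      rw [hμzp] at hx
      obtain ⟨k, hk⟩ := hx
      have hxz : (x : L) = (ζ : L) ^ k := by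
        rw [← Units.val_zpow_eq_zpow_val]
        exact (congrArg Units.val hk).symm
      rw [hxz]
      exact zpow_mem (IntermediateField.mem_adjoin_simple_self K (ζ : L)) k
    · refine IntermediateField.adjoin.mono K _ _ ?_
      rintro z hz
      rw [Set.mem_singleton_iff] at hz
      exact ⟨ζ, hζmem, hz.symm⟩
  obtain ⟨σ0, hσ0⟩ := hcyc.exists_generator
  have hcard : Fintype.card (L ≃ₐ[K] L) = p ^ m := by
    rw [← Nat.card_eq_fintype_card, IsGalois.card_aut_eq_finrank, hdeg]
  have hordσ0 : orderOf σ0 = p ^ m := by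
    rw [orderOf_eq_card_of_forall_mem_zpowers hσ0, Nat.card_eq_fintype_card, hcard]
  by_cases hbot : CommGroup.primaryComponent Kˣ p = ⊥
  · constructor
    · intro _; exact Or.inl hbot
    · intro _; rw [hbot]; exact bot_le
  obtain ⟨gK, hgK⟩ := IsCyclic.exists_generator (α := CommGroup.primaryComponent Kˣ p)
  set ξ : Kˣ := (gK : Kˣ) with hξdef
  have hξmem : ξ ∈ CommGroup.primaryComponent Kˣ p := gK.2
  obtain ⟨a, ha⟩ : ∃ n : ℕ, orderOf ξ = p ^ n := by
    obtain ⟨n, hn⟩ := gK.2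
    obtain ⟨k, -, hk⟩ := (Nat.dvd_prime_pow hp).1 (orderOf_dvd_of_pow_eq_one hn)
    exact ⟨k, hk⟩
  have hμKzp : (CommGroup.primaryComponent Kˣ p : Subgroup Kˣ) = Subgroup.zpowers ξ := by
    refine le_antisymm ?_ ((Subgroup.zpowers_le).mpr hξmem)
    intro x hx
    obtain ⟨k, hk⟩ := hgK ⟨x, hx⟩
    exact ⟨k, by simpa using congrArg Subtype.val hk⟩
  have hdvd_pa : ∀ u : Kˣ, u ∈ CommGroup.primaryComponent Kˣ p → orderOf u ∣ p ^ a := by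
    intro u hu
    rw [hμKzp] at hu
    obtain ⟨k, hk⟩ := hu
    refine orderOf_dvd_of_pow_eq_one ?_
    have hk' : ξ ^ k = u := hk
    rw [← hk', ← zpow_natCast, ← zpow_mul, mul_comm, zpow_mul, zpow_natCast, ← ha,
      pow_orderOf_eq_one, one_zpow]
  have ha1 : 1 ≤ a := by
    by_contra hc
    have ha0 : a = 0 := by omega
    have hξ1 : ξ = 1 := by rw [← orderOf_eq_one_iff, ha, ha0, pow_zero]
    exact hbot (by rw [hμKzp, hξ1, Subgroup.zpowers_eq_bot])
  have hιξ_mem : ι ξ ∈ CommGroup.primaryComponent Lˣ p :=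
    ⟨a, by rw [← ha, ← orderOf_injective ι hι_inj ξ]; exact pow_orderOf_eq_one _⟩
  have hιξ_ord : orderOf (ι ξ) = p ^ a := by rw [orderOf_injective ι hι_inj, ha]
  obtain ⟨k0, hk0⟩ : ι ξ ∈ Subgroup.zpowers ζ := hμzp ▸ hιξ_mem
  have hk0' : ζ ^ k0 = ι ξ := hk0
  obtain ⟨t, htlt, ht⟩ := aux_zpow_eq_pow ζ hbne k0
  have hζt : ζ ^ t = ι ξ := ht.trans hk0'
  have hordζt : orderOf (ζ ^ t) = p ^ a := by rw [hζt, hιξ_ord]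
  have ht0 : t ≠ 0 := by
    intro h0
    rw [h0, pow_zero, orderOf_one] at hordζt
    have h1 : (1:ℕ) < p ^ a := Nat.one_lt_pow (by omega) hp.one_lt
    omega
  have hgcdt : Nat.gcd (p ^ b) t = p ^ (b - a) ∧ a ≤ b := by
    have h1 : orderOf (ζ ^ t) = orderOf ζ / Nat.gcd (orderOf ζ) t := orderOf_pow' ζ ht0
    rw [hb] at h1
    rw [h1] at hordζt
    obtain ⟨w, hwb, hw⟩ := (Nat.dvd_prime_pow hp).1 (Nat.gcd_dvd_left (p ^ b) t)
    rw [hw, Nat.pow_div hwb hp.pos] at hordζt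
    have hba : b - w = a := Nat.pow_right_injective hp.two_le hordζt
    exact ⟨by rw [hw]; congr 1; omega, by omega⟩
  have hab : a ≤ b := hgcdt.2
  have hb1 : 1 ≤ b := le_trans ha1 hab
  haveI : NeZero (p ^ b) := ⟨(pow_pos hp.pos b).ne'⟩
  haveI : Fact (1 < p ^ b) := ⟨Nat.one_lt_pow (by omega) hp.one_lt⟩
  have hζprim : IsPrimitiveRoot ((ζ : Lˣ) : L) (p ^ b) := by
    refine IsPrimitiveRoot.coe_units_iff.mpr ?_
    rw [← hb]
    exact IsPrimitiveRoot.orderOf ζ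
  set χ : (L ≃ₐ[K] L) →* (ZMod (p ^ b))ˣ := hζprim.autToPow K with hχ
  have hspec : ∀ σ : L ≃ₐ[K] L, ((ζ : Lˣ) : L) ^ ((χ σ : ZMod (p ^ b))).val = σ ((ζ : Lˣ) : L) :=
    fun σ => hζprim.autToPow_spec K σ
  set c : (ZMod (p ^ b))ˣ := χ σ0 with hc
  set C : ℕ := ((c : ZMod (p ^ b))).val with hC
  have hCcast : ((C : ℕ) : ZMod (p ^ b)) = (c : ZMod (p ^ b)) := ZMod.natCast_rightInverse _
  obtain ⟨e, hem, he⟩ : ∃ e, e ≤ m ∧ orderOf c = p ^ e := by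
    have h1 : orderOf c ∣ p ^ m := by
      rw [← hordσ0]; exact orderOf_map_dvd χ σ0
    obtain ⟨e, hem, he⟩ := (Nat.dvd_prime_pow hp).1 h1
    exact ⟨e, hem, he⟩
  have hσ0ζ : ∀ n : ℕ, σ0 (((ζ : Lˣ) : L) ^ n) = ((ζ : Lˣ) : L) ^ (C * n) := by
    intro n
    have h1 : σ0 ((ζ : Lˣ) : L) = ((ζ : Lˣ) : L) ^ C := (hspec σ0).symm
    rw [map_pow, h1, ← pow_mul]
  -- c ^ j = 1 ↔ p^b ∣ C^j - 1 (in ℤ)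
  have hcpow : ∀ j : ℕ, (c ^ j = 1 ↔ ((p : ℤ) ^ b ∣ (C : ℤ) ^ j - 1)) := by
    intro j
    have h1 : (c ^ j = 1) ↔ ((c : ZMod (p ^ b)) ^ j = 1) := by
      rw [Units.ext_iff, Units.val_pow_eq_pow_val, Units.val_one]
    rw [h1, ← hCcast, ← Nat.cast_pow,
      show (1 : ZMod (p ^ b)) = ((1 : ℕ) : ZMod (p ^ b)) from (Nat.cast_one).symm,
      ZMod.natCast_eq_natCast_iff, Nat.modEq_iff_dvd]
    constructor
    · intro hdvd
      have h2 : ((p ^ b : ℕ) : ℤ) ∣ -(((1:ℕ):ℤ) - ((C ^ j : ℕ):ℤ)) := dvd_neg.mpr hdvd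
      have h3 : -(((1:ℕ):ℤ) - ((C ^ j : ℕ):ℤ)) = (C:ℤ) ^ j - 1 := by push_cast; ring
      rw [h3] at h2
      exact_mod_cast h2
    · intro hdvd
      have h3 : ((1:ℕ):ℤ) - ((C ^ j : ℕ):ℤ) = -((C:ℤ) ^ j - 1) := by push_cast; ring
      rw [h3, dvd_neg]
      exact_mod_cast hdvd
  -- p ∣ C - 1
  have hpC : (p : ℤ) ∣ (C : ℤ) - 1 := by
    have hdvdpb : p ∣ p ^ b := dvd_pow_self p (by omega)
    set φ : ZMod (p ^ b) →+* ZMod p := ZMod.castHom hdvdpb (ZMod p) with hφ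
    set u : (ZMod p)ˣ := Units.map φ.toMonoidHom c with hu
    have h1 : orderOf u ∣ p ^ e := by rw [← he]; exact orderOf_map_dvd _ c
    have h2 : orderOf u ∣ p - 1 := by
      rw [← ZMod.card_units p]
      exact orderOf_dvd_card
    have hco : Nat.Coprime (p ^ e) (p - 1) := by
      refine Nat.Coprime.pow_left e ?_
      rw [Nat.Prime.coprime_iff_not_dvd hp]
      intro hdvd
      have h2le := hp.two_le
      have := Nat.le_of_dvd (by omega) hdvd
      omega
    have h3 : orderOf u = 1 := Nat.eq_one_of_dvd_coprimes hco h1 h2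
    rw [orderOf_eq_one_iff] at h3
    have h4 : ((C : ℕ) : ZMod p) = 1 := by
      have h5 : φ ((c : ZMod (p ^ b))) = 1 := congrArg Units.val h3
      rw [← hCcast, map_natCast] at h5
      exact h5
    rw [show (1 : ZMod p) = ((1 : ℕ) : ZMod p) from (Nat.cast_one).symm,
      ZMod.natCast_eq_natCast_iff, Nat.modEq_iff_dvd] at h4
    rw [← dvd_neg]
    have h6 : -((C:ℤ) - 1) = ((1:ℕ):ℤ) - ((C:ℕ):ℤ) := by push_cast; ring
    rw [h6]
    exact h4
  set T : ℕ := ∑ i ∈ Finset.range (p ^ m), C ^ i with hT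
  -- main number-theoretic facts
  have hmain : b = a + e ∧ ((p:ℤ) ^ m ∣ (T:ℤ) ∧ ¬ (p:ℤ) ^ (m+1) ∣ (T:ℤ)) := by
    have hpI : Prime (p : ℤ) := Nat.prime_iff_prime_int.mp hp
    by_cases hc1 : c = 1
    · -- e = 0, C = 1, b = a, T = p ^ m
      have he0 : e = 0 := by
        have h1 : orderOf c = 1 := by rw [hc1, orderOf_one]
        rw [he] at h1
        by_contra hne
        have h2 : 1 < p ^ e := Nat.one_lt_pow (by omega) hp.one_lt
        omega
      have hC1 : C = 1 := by rw [hC, hc1, Units.val_one, ZMod.val_one]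
      have hTval : T = p ^ m := by
        rw [hT, hC1]
        simp
      have hba : b = a := by
        have hfix : σ0 ((ζ : Lˣ) : L) = ((ζ : Lˣ) : L) := by
          have h1 := hσ0ζ 1
          rw [pow_one, hC1, mul_one, pow_one] at h1
          exact h1
        obtain ⟨y, hy⟩ := aux_fixed_mem_range (aux_fixed_all hσ0 hfix)
        have hy0 : y ≠ 0 := by
          intro h0
          rw [h0, map_zero] at hy
          exact Units.ne_zero ζ hy.symm
        set yu : Kˣ := Units.mk0 y hy0 with hyu
        have hιyu : ι yu = ζ := by
          refine Units.ext ?_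
          rw [hιval]
          exact hy
        have hyuord : orderOf yu = p ^ b := by
          rw [← orderOf_injective ι hι_inj, hιyu, hb]
        have hyumem : yu ∈ CommGroup.primaryComponent Kˣ p := ⟨b, by rw [← hyuord]; exact pow_orderOf_eq_one _⟩
        have := hdvd_pa yu hyumem
        rw [hyuord] at this
        have := (Nat.pow_dvd_pow_iff_le_right hp.one_lt).1 this
        omega
      refine ⟨by omega, ?_, ?_⟩
      · rw [hTval]; push_cast; exact dvd_rfl
      · rw [hTval]
        push_cast
        rw [pow_dvd_pow_iff hpI.ne_zero hpI.not_unit]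
        omega
    · -- c ≠ 1 case
      have he1 : 1 ≤ e := by
        by_contra hce
        have he0 : e = 0 := by omega
        rw [he0, pow_zero, orderOf_eq_one_iff] at he
        exact hc1 he
      have hC1 : C ≠ 1 := by
        intro hC1
        refine hc1 (Units.ext ?_)
        rw [← hCcast, hC1, Nat.cast_one, Units.val_one]
      have hCm1ne : (C : ℤ) - 1 ≠ 0 := by
        intro h0
        have : (C : ℤ) = 1 := by omega
        exact hC1 (by exact_mod_cast this)
      have hfinmul : FiniteMultiplicity ((p : ℤ)) ((C:ℤ) - 1) :=
        Int.finiteMultiplicity_iff.mpr ⟨by simpa using hp.ne_one, hCm1ne⟩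
      set w : ℕ := multiplicity ((p:ℤ)) ((C:ℤ) - 1) with hw
      have hwe : emultiplicity ((p:ℤ)) ((C:ℤ) - 1) = (w : ℕ∞) :=
        hfinmul.emultiplicity_eq_multiplicity
      have hpnotC : ¬ (p:ℤ) ∣ (C:ℤ) := by
        intro hdvd
        have h1 : (p:ℤ) ∣ 1 := by
          have := dvd_sub hdvd hpC
          simpa using this
        have := Int.le_of_dvd one_pos h1
        have := hp.two_le
        omega
      have hlte : ∀ j : ℕ, emultiplicity ((p:ℤ)) ((C:ℤ) ^ (p ^ j) - 1) = (w : ℕ∞) + j := by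
        intro j
        have h1 := Int.emultiplicity_pow_sub_pow hp (hp.odd_of_ne_two hodd)
          (by simpa using hpC) hpnotC (p ^ j)
        rw [one_pow] at h1
        rw [h1, hwe, emultiplicity_pow_self_of_prime hp.prime]
      have hble : b ≤ w + e := by
        have h1 : c ^ (p ^ e) = 1 := by rw [← he]; exact pow_orderOf_eq_one c
        rw [hcpow] at h1
        have h2 : (b : ℕ∞) ≤ emultiplicity ((p:ℤ)) ((C:ℤ) ^ (p ^ e) - 1) :=
          pow_dvd_iff_le_emultiplicity.mp h1
        rw [hlte e] at h2
        exact_mod_cast h2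
      have hbgt : ¬ (b ≤ w + (e - 1)) := by
        intro hle
        have h1 : c ^ (p ^ (e - 1)) ≠ 1 := by
          refine pow_ne_one_of_lt_orderOf (pow_pos hp.pos _).ne' ?_
          rw [he]
          exact Nat.pow_lt_pow_right hp.one_lt (by omega)
        rw [ne_eq, hcpow] at h1
        refine h1 ?_
        rw [pow_dvd_iff_le_emultiplicity, hlte (e-1)]
        exact_mod_cast hle
      have hbwe : b = w + e := by omega
      -- a ≤ w
      have hemt : emultiplicity ((p:ℤ)) ((t:ℕ):ℤ) = ((b - a : ℕ) : ℕ∞) := by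
        rw [Int.natCast_emultiplicity]
        refine emultiplicity_eq_coe.mpr ⟨?_, ?_⟩
        · rw [← hgcdt.1]; exact Nat.gcd_dvd_right _ _
        · intro hdvd
          have h1 : p ^ (b - a + 1) ∣ Nat.gcd (p ^ b) t :=
            Nat.dvd_gcd (pow_dvd_pow p (by omega)) hdvd
          rw [hgcdt.1] at h1
          have := (Nat.pow_dvd_pow_iff_le_right hp.one_lt).1 h1
          omega
      have haw : a ≤ w := by
        have hfixt : ((ζ : Lˣ) : L) ^ (C * t) = ((ζ : Lˣ) : L) ^ t := by
          rw [← hσ0ζ t]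
          have h1 : ((ζ ^ t : Lˣ) : L) = algebraMap K L (ξ : K) := by
            rw [hζt]; exact hιval ξ
          rw [Units.val_pow_eq_pow_val] at h1
          rw [h1]
          exact AlgEquiv.commutes σ0 (ξ : K)
        have h2 : (ζ : Lˣ) ^ (C * t) = ζ ^ t := by
          refine Units.ext ?_
          rw [Units.val_pow_eq_pow_val, Units.val_pow_eq_pow_val]
          exact hfixt
        have h3 := pow_eq_pow_iff_modEq.mp h2
        rw [hb] at h3
        have h4 : ((p ^ b : ℕ) : ℤ) ∣ ((t:ℕ):ℤ) - ((C * t : ℕ):ℤ) := (Nat.modEq_iff_dvd).mp h3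
        have h5 : (p:ℤ) ^ b ∣ ((t:ℕ):ℤ) * ((C:ℤ) - 1) := by
          have h6 : ((t:ℕ):ℤ) * ((C:ℤ) - 1) = -(((t:ℕ):ℤ) - ((C * t : ℕ):ℤ)) := by
            push_cast; ring
          rw [h6]
          rw [dvd_neg]
          exact_mod_cast h4
        have h7 : (b : ℕ∞) ≤ emultiplicity ((p:ℤ)) (((t:ℕ):ℤ) * ((C:ℤ) - 1)) :=
          pow_dvd_iff_le_emultiplicity.mp h5
        rw [emultiplicity_mul hpI, hemt, hwe] at h7
        have h8 : b ≤ (b - a) + w := by exact_mod_cast h7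
        omega
      -- w ≤ a
      have hwa : w ≤ a := by
        have hwb : w < b := by omega
        have hpw_dvd : (p:ℤ) ^ w ∣ (C:ℤ) - 1 := pow_dvd_of_le_emultiplicity (le_of_eq hwe.symm)
        have hyfix : (ζ : Lˣ) ^ (C * p ^ (b - w)) = ζ ^ (p ^ (b - w)) := by
          rw [pow_eq_pow_iff_modEq, hb]
          rw [Nat.modEq_iff_dvd]
          have h1 : ((p ^ (b - w) : ℕ):ℤ) - ((C * p ^ (b - w) : ℕ):ℤ)
              = -(((p:ℤ) ^ (b - w)) * ((C:ℤ) - 1)) := by push_cast; ring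
          rw [h1, dvd_neg, Nat.cast_pow]
          have h2 : (p:ℤ) ^ b = (p:ℤ) ^ (b - w) * (p:ℤ) ^ w := by
            rw [← pow_add]; congr 1; omega
          rw [h2]
          exact mul_dvd_mul_left _ hpw_dvd
        have hfixy : σ0 (((ζ : Lˣ) : L) ^ (p ^ (b - w))) = ((ζ : Lˣ) : L) ^ (p ^ (b - w)) := by
          rw [hσ0ζ]
          have := congrArg Units.val hyfix
          rw [Units.val_pow_eq_pow_val, Units.val_pow_eq_pow_val] at this
          exact this
        obtain ⟨y, hy⟩ := aux_fixed_mem_range (aux_fixed_all hσ0 hfixy)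
        have hy0 : y ≠ 0 := by
          intro h0
          rw [h0, map_zero] at hy
          exact (pow_ne_zero _ (Units.ne_zero ζ)) hy.symm
        set yu : Kˣ := Units.mk0 y hy0 with hyu
        have hιyu : ι yu = ζ ^ (p ^ (b - w)) := by
          refine Units.ext ?_
          rw [hιval, Units.val_pow_eq_pow_val]
          exact hy
        have hgcd2 : Nat.gcd (p ^ (b - w)) (p ^ b) = p ^ (b - w) := by
          have := aux_gcd_dvd_pow hp (m := b - w) (b := b) (T := p ^ (b - w)) dvd_rfl
            (by rw [Nat.pow_dvd_pow_iff_le_right hp.one_lt]; omega)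
          rw [this]
          congr 1
          omega
        have hyuord : orderOf yu = p ^ w := by
          have h1 : orderOf (ι yu) = p ^ w := by
            rw [hιyu, orderOf_pow' ζ (pow_pos hp.pos _).ne', hb,
              Nat.gcd_comm, hgcd2, Nat.pow_div (by omega) hp.pos]
            congr 1
            omega
          exact (orderOf_injective ι hι_inj yu).symm.trans h1
        have := hdvd_pa yu ⟨w, by rw [← hyuord]; exact pow_orderOf_eq_one _⟩
        rw [hyuord] at this
        exact (Nat.pow_dvd_pow_iff_le_right hp.one_lt).1 this
      have hwa' : w = a := le_antisymm hwa haw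
      refine ⟨by omega, ?_, ?_⟩
      · -- p^m ∣ T
        have hgeom : (T:ℤ) * ((C:ℤ) - 1) = (C:ℤ) ^ (p ^ m) - 1 := by
          rw [hT]; push_cast; exact geom_sum_mul _ _
        have h6 : emultiplicity ((p:ℤ)) ((T:ℤ) * ((C:ℤ) - 1)) = (w : ℕ∞) + m := by
          rw [hgeom]; exact hlte m
        rw [emultiplicity_mul hpI, hwe] at h6
        have h7 : emultiplicity ((p:ℤ)) (T:ℤ) = (m : ℕ∞) := by
          have hwne : (w : ℕ∞) ≠ ⊤ := by simp
          have h8 : emultiplicity ((p:ℤ)) (T:ℤ) + (w:ℕ∞) = (m : ℕ∞) + (w:ℕ∞) := by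
            rw [h6, add_comm]
          exact WithTop.add_right_cancel hwne h8
        exact pow_dvd_of_le_emultiplicity (le_of_eq h7.symm)
      · have hgeom : (T:ℤ) * ((C:ℤ) - 1) = (C:ℤ) ^ (p ^ m) - 1 := by
          rw [hT]; push_cast; exact geom_sum_mul _ _
        have h6 : emultiplicity ((p:ℤ)) ((T:ℤ) * ((C:ℤ) - 1)) = (w : ℕ∞) + m := by
          rw [hgeom]; exact hlte m
        rw [emultiplicity_mul hpI, hwe] at h6
        have hwne : (w : ℕ∞) ≠ ⊤ := by simp
        have h7 : emultiplicity ((p:ℤ)) (T:ℤ) = (m : ℕ∞) := by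
          have h8 : emultiplicity ((p:ℤ)) (T:ℤ) + (w:ℕ∞) = (m : ℕ∞) + (w:ℕ∞) := by
            rw [h6, add_comm]
          exact WithTop.add_right_cancel hwne h8
        intro hdvd
        have h9 : ((m+1 : ℕ) : ℕ∞) ≤ emultiplicity ((p:ℤ)) (T:ℤ) :=
          pow_dvd_iff_le_emultiplicity.mp hdvd
        rw [h7] at h9
        have : m + 1 ≤ m := by exact_mod_cast h9
        omega
  obtain ⟨hKF1, hTm, hTm1⟩ := hmain
  have hKF2 : Nat.gcd T (p ^ b) = p ^ min m b := by
    refine aux_gcd_dvd_pow hp ?_ ?_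
    · exact_mod_cast hTm
    · intro hdvd
      exact hTm1 (by exact_mod_cast hdvd)
  set S : ℕ := ∑ σ : (L ≃ₐ[K] L), ((χ σ : ZMod (p ^ b))).val with hS
  have hST : Nat.gcd S (p ^ b) = Nat.gcd T (p ^ b) := by
    have hmodeq : S ≡ T [MOD p ^ b] := by
      rw [← ZMod.natCast_eq_natCast_iff]
      have h1 : ((S : ℕ) : ZMod (p ^ b)) = ∑ σ : (L ≃ₐ[K] L), (χ σ : ZMod (p ^ b)) := by
        rw [hS]
        push_cast
        exact Finset.sum_congr rfl fun σ _ => ZMod.natCast_rightInverse _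
      have h2 : ((T : ℕ) : ZMod (p ^ b)) = ∑ i ∈ Finset.range (p ^ m), ((c : ZMod (p ^ b))) ^ i := by
        rw [hT]
        push_cast
        exact Finset.sum_congr rfl fun i _ => by rw [hCcast]
      have hbij : Function.Bijective (fun i : Fin (p ^ m) => σ0 ^ (i : ℕ)) := by
        rw [Fintype.bijective_iff_injective_and_card]
        constructor
        · intro i j hij
          have h3 := pow_eq_pow_iff_modEq.mp hij
          rw [hordσ0] at h3
          exact Fin.ext (Nat.ModEq.eq_of_lt_of_lt h3 i.2 j.2)
        · rw [Fintype.card_fin, hcard]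
      have h5 : ∑ σ : (L ≃ₐ[K] L), ((χ σ : ZMod (p ^ b)))
          = ∑ i : Fin (p ^ m), ((c : ZMod (p ^ b))) ^ (i : ℕ) := by
        refine (Fintype.sum_bijective _ hbij (fun i => ((c : ZMod (p ^ b))) ^ (i : ℕ))
          (fun σ => ((χ σ : ZMod (p ^ b)))) (fun i => ?_)).symm
        show ((c : ZMod (p ^ b))) ^ (i : ℕ) = ((χ (σ0 ^ (i : ℕ)) : ZMod (p ^ b)))
        rw [map_pow, Units.val_pow_eq_pow_val, ← hc]
      have h6 : ∑ i : Fin (p ^ m), ((c : ZMod (p ^ b))) ^ (i : ℕ)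
          = ∑ i ∈ Finset.range (p ^ m), ((c : ZMod (p ^ b))) ^ i := by
        exact Fin.sum_univ_eq_sum_range _ _
      rw [h1, h2, h5, h6]
    have h4 : S % p ^ b = T % p ^ b := hmodeq
    rw [Nat.gcd_comm S, Nat.gcd_comm T, Nat.gcd_rec (p ^ b) S, Nat.gcd_rec (p ^ b) T, h4]
  have hNζ : ι (N ζ) = ζ ^ S := by
    refine Units.ext ?_
    have h1 : ((ι (N ζ) : Lˣ) : L) = algebraMap K L (Algebra.norm K ((ζ : Lˣ) : L)) := rfl
    rw [h1, Algebra.norm_eq_prod_automorphisms]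
    have h2 : ∀ σ : (L ≃ₐ[K] L), σ ((ζ : Lˣ) : L) = ((ζ : Lˣ) : L) ^ ((χ σ : ZMod (p ^ b))).val :=
      fun σ => (hspec σ).symm
    rw [Finset.prod_congr rfl (fun σ _ => h2 σ), Finset.prod_pow_eq_pow_sum,
      Units.val_pow_eq_pow_val]
  have hP : (CommGroup.primaryComponent Kˣ p ≤
      Subgroup.map N (CommGroup.primaryComponent Lˣ p)) ↔ Nat.gcd S (p ^ b) ∣ t := by
    rw [hμzp, hμKzp, MonoidHom.map_zpowers, Subgroup.zpowers_le]
    have hmem : ξ ∈ Subgroup.zpowers (N ζ) ↔ ι ξ ∈ Subgroup.zpowers (ι (N ζ)) := by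
      constructor
      · rintro ⟨k, hk⟩
        refine ⟨k, ?_⟩
        show ι (N ζ) ^ k = ι ξ
        rw [← map_zpow]
        exact congrArg ι hk
      · rintro ⟨k, hk⟩
        refine ⟨k, ?_⟩
        refine hι_inj ?_
        show ι (N ζ ^ k) = ι ξ
        rw [map_zpow]
        exact hk
    rw [hmem, hNζ, ← hζt]
    have := aux_mem_zpowers_pow_iff (g := ζ) hbne S t
    rw [hb] at this
    exact this
  have hsqueeze : Nat.gcd S (p ^ b) ∣ t ↔ e = m := by
    rw [hST, hKF2]
    constructor
    · intro hdvd
      have h1 : p ^ min m b ∣ p ^ (b - a) := by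
        rw [← hgcdt.1]
        exact Nat.dvd_gcd (pow_dvd_pow p (min_le_right _ _)) hdvd
      have h2 : min m b ≤ b - a := (Nat.pow_dvd_pow_iff_le_right hp.one_lt).1 h1
      have h3 := min_le_left m b
      have h4 := min_le_right m b
      have h5 : min m b = m ∨ min m b = b := by omega
      omega
    · intro hem2
      have h1 : min m b ≤ b - a := by
        have h3 := min_le_left m b
        omega
      calc p ^ min m b ∣ p ^ (b - a) := pow_dvd_pow p h1
        _ = Nat.gcd (p ^ b) t := hgcdt.1.symm
        _ ∣ t := Nat.gcd_dvd_right _ _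
  have hadj_iff : (IntermediateField.adjoin K {((ζ : Lˣ) : L)} = ⊤) ↔ e = m := by
    rw [aux_adjoin_top_iff]
    constructor
    · intro h
      have h1 : (σ0 ^ (p ^ e)) ((ζ : Lˣ) : L) = ((ζ : Lˣ) : L) := by
        rw [← hspec (σ0 ^ (p ^ e))]
        have h2 : χ (σ0 ^ (p ^ e)) = 1 := by
          rw [map_pow, ← hc, ← he]
          exact pow_orderOf_eq_one c
        rw [h2, Units.val_one, ZMod.val_one, pow_one]
      have h3 := h _ h1
      have h4 : orderOf σ0 ∣ p ^ e := orderOf_dvd_of_pow_eq_one h3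
      rw [hordσ0] at h4
      have h5 := (Nat.pow_dvd_pow_iff_le_right hp.one_lt).1 h4
      omega
    · intro hem2 σ hσ
      obtain ⟨k1, hk1⟩ := hσ0 σ
      have hk1' : σ0 ^ k1 = σ := hk1
      obtain ⟨k, hklt, hk⟩ := aux_zpow_eq_pow σ0
        (by rw [hordσ0]; exact (pow_pos hp.pos m).ne') k1
      have hσk : σ = σ0 ^ k := by rw [hk]; exact hk1'.symm
      have h5 : ((ζ : Lˣ) : L) ^ ((χ (σ0 ^ k) : ZMod (p ^ b))).val = ((ζ : Lˣ) : L) := by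
        rw [hspec (σ0 ^ k), ← hσk]
        exact hσ
      have h6 : (ζ : Lˣ) ^ ((χ (σ0 ^ k) : ZMod (p ^ b))).val = ζ ^ 1 := by
        refine Units.ext ?_
        rw [Units.val_pow_eq_pow_val, pow_one]
        exact h5
      have h7 := pow_eq_pow_iff_modEq.mp h6
      rw [hb] at h7
      have h8 : χ (σ0 ^ k) = 1 := by
        refine Units.ext ?_
        have h9 : ((((χ (σ0 ^ k) : ZMod (p ^ b))).val : ℕ) : ZMod (p ^ b))
            = ((1 : ℕ) : ZMod (p ^ b)) := by
          rw [ZMod.natCast_eq_natCast_iff]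
          exact h7
        rw [ZMod.natCast_rightInverse _, Nat.cast_one] at h9
        rw [h9, Units.val_one]
      have h10 : c ^ k = 1 := by
        rw [hc, ← map_pow]
        exact h8
      have h11 : p ^ e ∣ k := by rw [← he]; exact orderOf_dvd_of_pow_eq_one h10
      have h12 : σ0 ^ k = 1 := by
        refine orderOf_dvd_iff_pow_eq_one.mp ?_
        rw [hordσ0, ← hem2]
        exact h11
      rw [hσk, h12]
  rw [hP, hsqueeze, hadj, hadj_iff, or_iff_right hbot]





/-- Let `p` be an odd prime and `L/K` a finite cyclic extension of number fields of `p`-power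
degree.  Then `Norm_{L/K}(μ_L) = μ_K` if and only if either the Sylow `p`-subgroup of `μ_K` is
trivial or `L = K(μ_{L,p})`.  Here `μ_F` is the torsion subgroup of `Fˣ` and `μ_{F,p}` its
`p`-primary component. -/
theorem norm_torsion_eq_iff
    (p : ℕ) [Fact p.Prime] (hodd : p ≠ 2)
    (K L : Type) [Field K] [Field L] [NumberField K] [NumberField L]
    [Algebra K L] [IsGalois K L] [FiniteDimensional K L]
    (hcyc : IsCyclic (L ≃ₐ[K] L)) (hdeg : ∃ m : ℕ, Module.finrank K L = p ^ m) :
    Subgroup.map (Units.map (Algebra.norm K : L →* K)) (CommGroup.torsion Lˣ)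
        = CommGroup.torsion Kˣ ↔
      (CommGroup.primaryComponent Kˣ p = ⊥ ∨
        IntermediateField.adjoin K
          (Units.val '' ((CommGroup.primaryComponent Lˣ p : Subgroup Lˣ) : Set Lˣ)) = ⊤) := by
  obtain ⟨m, hm⟩ := hdeg
  rw [claimA p K L hm, claimB p hodd K L hcyc hm]
end

section
/- Let p be an odd prime, n ≥ 1, let Γ be a cyclic group of order p^n with generator σ, and let R = ℤ_p[Γ] be the group ring. For any a with 1 ≤ a ≤ n, the ideal M_{a,0} := R·(σ^{p^{n−a}} − 1) of R is an indecomposable R-module; that is, M_{a,0} is nonzero and is not isomorphic to a direct sum of two nonzero R-modules. -/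
open MonoidAlgebra

section Aux

variable (p : ℕ) [Fact p.Prime] (Γ : Type) [CommGroup Γ]

/-- Coefficientwise reduction `ℤ_p[Γ] → 𝔽_p[Γ]`. -/
noncomputable def psiRed : MonoidAlgebra ℤ_[p] Γ →+* MonoidAlgebra (ZMod p) Γ :=
  liftNCRingHom (MonoidAlgebra.singleOneRingHom.comp PadicInt.toZMod)
    (MonoidAlgebra.of (ZMod p) Γ) (fun _ _ => Commute.all _ _)

/-- Augmentation `𝔽_p[Γ] → 𝔽_p`. -/
noncomputable def augFp : MonoidAlgebra (ZMod p) Γ →+* ZMod p :=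
  liftNCRingHom (RingHom.id _) 1 (fun _ _ => Commute.all _ _)

lemma psiRed_single (g : Γ) (c : ℤ_[p]) :
    psiRed p Γ (MonoidAlgebra.single g c) = MonoidAlgebra.single g (PadicInt.toZMod c) := by
  show liftNC _ _ (MonoidAlgebra.single g c) = _
  rw [MonoidAlgebra.liftNC_single]
  show MonoidAlgebra.single 1 (PadicInt.toZMod c) * MonoidAlgebra.single g 1 = _
  rw [MonoidAlgebra.single_mul_single, one_mul, mul_one]

lemma augFp_single (g : Γ) (c : ZMod p) :
    augFp p Γ (MonoidAlgebra.single g c) = c := by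
  show liftNC _ _ (MonoidAlgebra.single g c) = _
  rw [MonoidAlgebra.liftNC_single]
  simp

lemma charP_MA : CharP (MonoidAlgebra (ZMod p) Γ) p := by
  constructor
  intro k
  have h1 : (k : MonoidAlgebra (ZMod p) Γ)
      = MonoidAlgebra.singleOneRingHom (k : ZMod p) := by
    rw [map_natCast]
  have h2 : MonoidAlgebra.singleOneRingHom (k : ZMod p)
      = MonoidAlgebra.single (1 : Γ) (k : ZMod p) := rfl
  rw [h1, h2]
  rw [MonoidAlgebra.single_eq_zero, ZMod.natCast_eq_zero_iff]

lemma sum_single_support (k : Type) [Semiring k] (y : MonoidAlgebra k Γ) :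
    y = ∑ g ∈ y.coeff.support, (MonoidAlgebra.single g (y.coeff g) : MonoidAlgebra k Γ) := by
  conv_lhs => rw [← MonoidAlgebra.sum_coeff_single y]
  rfl

/-- Frobenius collapse: in `𝔽_p[Γ]` with `Γ` of exponent dividing `p^n`,
`y ^ p ^ n` is the scalar given by the augmentation of `y`. -/
lemma frobenius_collapse (n : ℕ) (hΓ : ∀ g : Γ, g ^ p ^ n = 1)
    (y : MonoidAlgebra (ZMod p) Γ) :
    y ^ p ^ n = MonoidAlgebra.single (1 : Γ) (augFp p Γ y) := by
  haveI := charP_MA p Γ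
  haveI : ExpChar (MonoidAlgebra (ZMod p) Γ) p := ExpChar.prime Fact.out
  calc y ^ p ^ n
      = (∑ g ∈ y.coeff.support, (MonoidAlgebra.single g (y.coeff g) : MonoidAlgebra (ZMod p) Γ)) ^ p ^ n := by
        rw [← sum_single_support]
    _ = ∑ g ∈ y.coeff.support,
          (MonoidAlgebra.single g (y.coeff g) : MonoidAlgebra (ZMod p) Γ) ^ p ^ n :=
        sum_pow_char_pow _ _ _ _
    _ = ∑ g ∈ y.coeff.support, (MonoidAlgebra.single (1 : Γ) (y.coeff g) : MonoidAlgebra (ZMod p) Γ) := by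
        refine Finset.sum_congr rfl fun g _ => ?_
        rw [MonoidAlgebra.single_pow, hΓ g, ZMod.pow_card_pow]
    _ = MonoidAlgebra.single (1 : Γ) (∑ g ∈ y.coeff.support, y.coeff g) :=
        (map_sum (MonoidAlgebra.singleAddHom (1 : Γ)) _ _).symm
    _ = MonoidAlgebra.single (1 : Γ) (augFp p Γ y) := by
        congr 1
        conv_rhs => rw [sum_single_support Γ (ZMod p) y]
        rw [map_sum]
        exact Finset.sum_congr rfl fun g _ => (augFp_single p Γ g (y.coeff g)).symm

lemma psiRed_eq_mapRange (y : MonoidAlgebra ℤ_[p] Γ) :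
    psiRed p Γ y = MonoidAlgebra.ofCoeff (Finsupp.mapRange PadicInt.toZMod (map_zero _) y.coeff) := by
  induction y using MonoidAlgebra.induction_linear with
  | zero => simp
  | add f g hf hg => rw [map_add, hf, hg, MonoidAlgebra.coeff_add, Finsupp.mapRange_add (map_add _), MonoidAlgebra.ofCoeff_add]
  | single g c => rw [psiRed_single, MonoidAlgebra.coeff_single, Finsupp.mapRange_single, MonoidAlgebra.ofCoeff_single]

lemma ker_psiRed_le (y : MonoidAlgebra ℤ_[p] Γ) (hy : psiRed p Γ y = 0) :
    y ∈ Ideal.span {(p : MonoidAlgebra ℤ_[p] Γ)} := by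
  rw [psiRed_eq_mapRange] at hy
  have hcoef : ∀ g : Γ, (p : ℤ_[p]) ∣ y.coeff g := by
    intro g
    have h0 : PadicInt.toZMod (y.coeff g) = 0 := by
      have : (Finsupp.mapRange (⇑PadicInt.toZMod) (map_zero _) y.coeff) g
          = (0 : Γ →₀ ZMod p) g := by rw [MonoidAlgebra.ofCoeff_eq_zero.mp hy]
      simpa using this
    have hk : y.coeff g ∈ RingHom.ker (PadicInt.toZMod (p := p)) := h0
    rw [PadicInt.ker_toZMod, PadicInt.maximalIdeal_eq_span_p,
      Ideal.mem_span_singleton] at hk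
    exact hk
  rw [sum_single_support Γ ℤ_[p] y]
  refine Ideal.sum_mem _ fun g _ => ?_
  obtain ⟨t, ht⟩ := hcoef g
  rw [Ideal.mem_span_singleton]
  refine ⟨MonoidAlgebra.single g t, ?_⟩
  have hp : (p : MonoidAlgebra ℤ_[p] Γ) = MonoidAlgebra.single (1 : Γ) (p : ℤ_[p]) := by
    rw [show ((p : MonoidAlgebra ℤ_[p] Γ)
        = MonoidAlgebra.singleOneRingHom (p : ℤ_[p])) by rw [map_natCast]]
    rfl
  rw [hp]
  show MonoidAlgebra.single g (y.coeff g) = MonoidAlgebra.single 1 (p : ℤ_[p]) * MonoidAlgebra.single g t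
  rw [MonoidAlgebra.single_mul_single, one_mul, ← ht]

lemma isUnit_of_aug_ne_zero [Finite Γ] (n : ℕ) (hΓ : ∀ g : Γ, g ^ p ^ n = 1)
    (x : MonoidAlgebra ℤ_[p] Γ) (hx : augFp p Γ (psiRed p Γ x) ≠ 0) : IsUnit x := by
  have hp : p.Prime := Fact.out
  by_contra h
  obtain ⟨Q, hQmax, hxQ⟩ := exists_max_ideal_of_mem_nonunits h
  haveI : Module.Finite ℤ_[p] (MonoidAlgebra ℤ_[p] Γ) :=
    Module.Finite.of_basis (MonoidAlgebra.basis Γ ℤ_[p])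
  haveI : Algebra.IsIntegral ℤ_[p] (MonoidAlgebra ℤ_[p] Γ) :=
    Algebra.IsIntegral.of_finite _ _
  haveI hQc := Ideal.isMaximal_comap_of_isIntegral_of_isMaximal
    (R := ℤ_[p]) (S := MonoidAlgebra ℤ_[p] Γ) Q
  have hcomap : Q.comap (algebraMap ℤ_[p] (MonoidAlgebra ℤ_[p] Γ))
      = IsLocalRing.maximalIdeal ℤ_[p] := IsLocalRing.eq_maximalIdeal hQc
  -- p ∈ Q
  have hpQ : (p : MonoidAlgebra ℤ_[p] Γ) ∈ Q := by
    have hpc : (p : ℤ_[p]) ∈ Q.comap (algebraMap ℤ_[p] (MonoidAlgebra ℤ_[p] Γ)) := by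
      rw [hcomap, PadicInt.maximalIdeal_eq_span_p]
      exact Ideal.mem_span_singleton_self _
    have := Ideal.mem_comap.mp hpc
    rwa [map_natCast] at this
  -- lift the augmentation value to ℤ_[p]
  set c : ℤ_[p] := ((augFp p Γ (psiRed p Γ x)).val : ℤ_[p]) with hc
  have hcz : PadicInt.toZMod c = augFp p Γ (psiRed p Γ x) := by
    rw [hc, map_natCast, ZMod.natCast_val, ZMod.cast_id]
  have hcunit : IsUnit c := by
    by_contra hcu
    have hmem : c ∈ IsLocalRing.maximalIdeal ℤ_[p] := hcu
    rw [← PadicInt.ker_toZMod] at hmem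
    exact hx (by rw [← hcz]; exact hmem)
  -- x ^ p ^ n - c • 1 is in the kernel of psiRed
  have hker : psiRed p Γ (x ^ p ^ n - algebraMap ℤ_[p] _ c) = 0 := by
    rw [map_sub, map_pow, frobenius_collapse p Γ n hΓ]
    have halg : psiRed p Γ (algebraMap ℤ_[p] _ c)
        = MonoidAlgebra.single (1 : Γ) (PadicInt.toZMod c) := by
      have h1 : algebraMap ℤ_[p] (MonoidAlgebra ℤ_[p] Γ) c = MonoidAlgebra.single (1 : Γ) c := by
        rw [MonoidAlgebra.coe_algebraMap]; rfl
      rw [h1, psiRed_single]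
    rw [halg, hcz, sub_self]
  have hmem : x ^ p ^ n - algebraMap ℤ_[p] _ c ∈ Q := by
    have h1 := ker_psiRed_le p Γ _ hker
    have h2 : Ideal.span {(p : MonoidAlgebra ℤ_[p] Γ)} ≤ Q :=
      (Ideal.span_singleton_le_iff_mem _).mpr hpQ
    exact h2 h1
  have hxpow : x ^ p ^ n ∈ Q := Ideal.pow_mem_of_mem Q hxQ _ (pow_pos hp.pos n)
  have hcQ : algebraMap ℤ_[p] (MonoidAlgebra ℤ_[p] Γ) c ∈ Q := by
    have := Q.sub_mem hxpow hmem
    simpa using this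
  exact hQmax.ne_top (Ideal.eq_top_of_isUnit_mem Q hcQ (hcunit.map _))

lemma isLocalRing_MA [Finite Γ] (n : ℕ) (hΓ : ∀ g : Γ, g ^ p ^ n = 1) :
    IsLocalRing (MonoidAlgebra ℤ_[p] Γ) := by
  apply IsLocalRing.of_isUnit_or_isUnit_one_sub_self
  intro x
  by_cases hx : augFp p Γ (psiRed p Γ x) = 0
  · right
    apply isUnit_of_aug_ne_zero p Γ n hΓ
    rw [map_sub, map_sub, map_one, map_one, hx, sub_zero]
    exact one_ne_zero
  · exact Or.inl (isUnit_of_aug_ne_zero p Γ n hΓ x hx)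

end Aux

/-- Let `Γ` be a cyclic group of order `p ^ n` (`p` an odd prime, `n ≥ 1`) with generator `σ`,
and let `R = ℤ_p[Γ]`.  For `1 ≤ a ≤ n`, the ideal `M_{a,0} = R·(σ^{p^{n-a}} - 1)` is an
indecomposable `R`-module: it is nonzero and admits no decomposition as an (internal, equivalently
external) direct sum of two nonzero `R`-modules. -/
theorem ideal_span_sigma_sub_one_indecomposable
    (p : ℕ) [Fact p.Prime] (hodd : p ≠ 2) (n : ℕ) (hn : 1 ≤ n)
    (Γ : Type) [CommGroup Γ] (σ : Γ)
    (hcard : Nat.card Γ = p ^ n) (hgen : ∀ g : Γ, g ∈ Subgroup.zpowers σ)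
    (a : ℕ) (ha : 1 ≤ a) (han : a ≤ n)
    (M : Ideal (MonoidAlgebra ℤ_[p] Γ))
    (hM : M = Ideal.span {MonoidAlgebra.of ℤ_[p] Γ (σ ^ p ^ (n - a)) - 1}) :
    Nontrivial M ∧
      ∀ A B : Submodule (MonoidAlgebra ℤ_[p] Γ) M, IsCompl A B → A = ⊥ ∨ B = ⊥ := by
  have hp : p.Prime := Fact.out
  haveI : Finite Γ := Nat.finite_of_card_ne_zero (by rw [hcard]; exact (pow_pos hp.pos n).ne')
  have hΓ : ∀ g : Γ, g ^ p ^ n = 1 := fun g => by rw [← hcard]; exact pow_card_eq_one'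
  -- the generator is nonzero
  have horder : orderOf σ = p ^ n := by
    rw [orderOf_eq_card_of_forall_mem_zpowers hgen, hcard]
  have hτ : σ ^ p ^ (n - a) ≠ 1 := by
    intro hone
    have hdvd : orderOf σ ∣ p ^ (n - a) := orderOf_dvd_of_pow_eq_one hone
    rw [horder] at hdvd
    have hle : p ^ n ≤ p ^ (n - a) := Nat.le_of_dvd (pow_pos hp.pos _) hdvd
    have : n ≤ n - a := (Nat.pow_le_pow_iff_right hp.one_lt).mp hle
    omega
  set x : MonoidAlgebra ℤ_[p] Γ := MonoidAlgebra.of ℤ_[p] Γ (σ ^ p ^ (n - a)) - 1 with hx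
  have hxne : x ≠ 0 := by
    rw [hx, sub_ne_zero]
    intro heq
    have h1 : MonoidAlgebra.of ℤ_[p] Γ (σ ^ p ^ (n - a))
        = MonoidAlgebra.single (σ ^ p ^ (n - a)) (1 : ℤ_[p]) := rfl
    have h2 : (1 : MonoidAlgebra ℤ_[p] Γ) = MonoidAlgebra.single (1 : Γ) (1 : ℤ_[p]) := rfl
    rw [h1, h2] at heq
    rcases MonoidAlgebra.single_inj.mp heq with ⟨hg, _⟩ | ⟨h0, _⟩
    · exact hτ hg
    · exact one_ne_zero h0
  constructor
  · rw [Submodule.nontrivial_iff_ne_bot, hM]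
    rw [Ne, Ideal.span_singleton_eq_bot]
    exact hxne
  · intro A B hAB
    haveI hloc : IsLocalRing (MonoidAlgebra ℤ_[p] Γ) := isLocalRing_MA p Γ n hΓ
    have hxM : x ∈ M := by rw [hM]; exact Ideal.mem_span_singleton_self x
    set xg : M := ⟨x, hxM⟩ with hxg
    have hgenM : ∀ m : M, ∃ r : MonoidAlgebra ℤ_[p] Γ, r • xg = m := by
      rintro ⟨m, hm⟩
      rw [hM, Ideal.mem_span_singleton'] at hm
      obtain ⟨r, hr⟩ := hm
      exact ⟨r, Subtype.ext (by simpa [smul_eq_mul] using hr)⟩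
    have hxtop : xg ∈ A ⊔ B := by rw [hAB.codisjoint.eq_top]; trivial
    obtain ⟨u, hu, v, hv, huv⟩ := Submodule.mem_sup.mp hxtop
    obtain ⟨r, hr⟩ := hgenM u
    have key : (1 - r) • u = r • v := by
      have h1 : r • u + r • v = u := by rw [← smul_add, huv, hr]
      have h2 : (1 - r) • u = u - r • u :=
        (sub_smul 1 r u).trans (by rw [one_smul])
      exact h2.trans (eq_sub_of_add_eq' h1).symm
    have hbotmem : (1 - r) • u ∈ A ⊓ B := by
      refine ⟨A.smul_mem _ hu, ?_⟩
      rw [key]; exact B.smul_mem _ hv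
    rw [hAB.disjoint.eq_bot, Submodule.mem_bot] at hbotmem
    have hrv : r • v = 0 := by rw [← key, hbotmem]
    rcases IsLocalRing.isUnit_or_isUnit_one_sub_self r with hun | hun
    · right
      obtain ⟨w, hw⟩ := hun.exists_left_inv
      have hv0 : v = 0 := by
        calc v = (w * r) • v := by rw [hw, one_smul]
        _ = w • (r • v) := by rw [mul_smul]
        _ = 0 := by rw [hrv, smul_zero]
      have hxA : xg ∈ A := by rw [← huv, hv0, add_zero]; exact hu
      rw [eq_bot_iff]
      intro b hb
      obtain ⟨s, hs⟩ := hgenM b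
      have hbA : b ∈ A := by rw [← hs]; exact A.smul_mem _ hxA
      have hmem : b ∈ A ⊓ B := ⟨hbA, hb⟩
      rwa [hAB.disjoint.eq_bot] at hmem
    · left
      obtain ⟨w, hw⟩ := hun.exists_left_inv
      have hu0 : u = 0 := by
        calc u = (w * (1 - r)) • u := by rw [hw, one_smul]
        _ = w • ((1 - r) • u) := by rw [mul_smul]
        _ = 0 := by rw [hbotmem, smul_zero]
      have hxB : xg ∈ B := by rw [← huv, hu0, zero_add]; exact hv
      rw [eq_bot_iff]
      intro b hb
      obtain ⟨s, hs⟩ := hgenM b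
      have hbB : b ∈ B := by rw [← hs]; exact B.smul_mem _ hxB
      have hmem : b ∈ A ⊓ B := ⟨hb, hbB⟩
      rwa [hAB.disjoint.eq_bot] at hmem
end

section
/- Let p be an odd prime, n ≥ 1, let Γ be a cyclic group of order p^n with generator σ, and let R = ℤ_p[Γ]. Let a ≥ 1 and b ≥ 0 with a + b ≤ n, set c := n − (a + b), and let M_{a,b} be the ideal of R generated by p^a and σ^{p^c} − 1 when b ≥ 1, and the ideal generated by σ^{p^{n−a}} − 1 when b = 0. Then the 𝔽_p[Γ]-module M_{a,b}/pM_{a,b} has no direct summand isomorphic to the group algebra 𝔽_p[Γ]; that is, there is no 𝔽_p[Γ]-module N with M_{a,b}/pM_{a,b} ≅ 𝔽_p[Γ] ⊕ N. -/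
open MonoidAlgebra Finset


/-- The ring homomorphism between group rings induced by a ring homomorphism on coefficients
and a group homomorphism on groups. -/
noncomputable def groupRingHom {k₁ k₂ : Type*} [CommRing k₁] [CommRing k₂]
    {G₁ G₂ : Type*} [Group G₁] [Group G₂] (f : k₁ →+* k₂) (g : G₁ →* G₂) :
    MonoidAlgebra k₁ G₁ →+* MonoidAlgebra k₂ G₂ :=
  MonoidAlgebra.liftNCRingHom (MonoidAlgebra.singleOneRingHom.comp f)
    ((MonoidAlgebra.of k₂ G₂).comp g)
    (fun x y => by
      show MonoidAlgebra.single 1 (f x) * MonoidAlgebra.single (g y) 1 =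
        MonoidAlgebra.single (g y) 1 * MonoidAlgebra.single 1 (f x)
      simp [MonoidAlgebra.single_mul_single])

/-- The group algebra `𝔽_p[Γ]`, as a module over `ℤ_p[Γ]` via the natural projection
of group rings. -/
noncomputable def FpGroupRing (p : ℕ) [Fact p.Prime] (Γ : Type) [Group Γ] : Type :=
  MonoidAlgebra (ZMod p) Γ

noncomputable instance (p : ℕ) [Fact p.Prime] (Γ : Type) [Group Γ] :
    AddCommGroup (FpGroupRing p Γ) :=
  inferInstanceAs (AddCommGroup (MonoidAlgebra (ZMod p) Γ))

noncomputable instance (p : ℕ) [Fact p.Prime] (Γ : Type) [Group Γ] :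
    Module (MonoidAlgebra ℤ_[p] Γ) (FpGroupRing p Γ) :=
  Module.compHom (MonoidAlgebra (ZMod p) Γ) (groupRingHom PadicInt.toZMod (MonoidHom.id Γ))

section aux

variable {p : ℕ} [Fact p.Prime] {Γ : Type} [CommGroup Γ]

lemma grh_single (a : Γ) (b : ℤ_[p]) :
    groupRingHom (PadicInt.toZMod (p := p)) (MonoidHom.id Γ) (single a b)
      = single a (PadicInt.toZMod b) := by
  simp [groupRingHom, MonoidAlgebra.liftNCRingHom, MonoidAlgebra.liftNC_single,
    MonoidAlgebra.singleOneRingHom, MonoidAlgebra.single_mul_single]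

lemma grh_apply (f : MonoidAlgebra ℤ_[p] Γ) (γ : Γ) :
    (groupRingHom (PadicInt.toZMod (p := p)) (MonoidHom.id Γ) f).coeff γ
      = PadicInt.toZMod (f.coeff γ) := by
  induction f using MonoidAlgebra.induction_linear with
  | zero => simp
  | add f g hf hg =>
      rw [map_add]
      rw [MonoidAlgebra.coeff_add, Finsupp.add_apply, hf, hg, MonoidAlgebra.coeff_add, Finsupp.add_apply, map_add]
  | single a b =>
      rw [grh_single]
      by_cases h : a = γ <;> simp [MonoidAlgebra.coeff_single, Finsupp.single_apply, h]

lemma grh_ker {f : MonoidAlgebra ℤ_[p] Γ}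
    (hf : groupRingHom (PadicInt.toZMod (p := p)) (MonoidHom.id Γ) f = 0) :
    ∃ g, f = (p : MonoidAlgebra ℤ_[p] Γ) * g := by
  have hdvd : ∀ γ : Γ, ∃ y, f.coeff γ = (p : ℤ_[p]) * y := by
    intro γ
    have h1 : PadicInt.toZMod (f.coeff γ) = 0 := by rw [← grh_apply, hf]; rfl
    have h2 : f.coeff γ ∈ RingHom.ker (PadicInt.toZMod (p := p)) := h1
    rw [PadicInt.ker_toZMod, PadicInt.maximalIdeal_eq_span_p,
      Ideal.mem_span_singleton] at h2
    exact h2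
  choose y hy using hdvd
  refine ⟨∑ γ ∈ f.coeff.support, single γ (y γ), ?_⟩
  rw [Finset.mul_sum]
  have key : ∀ γ : Γ, (p : MonoidAlgebra ℤ_[p] Γ) * single γ (y γ) = single γ (f.coeff γ) := by
    intro γ
    rw [MonoidAlgebra.natCast_def, MonoidAlgebra.single_mul_single, one_mul, ← hy γ]
  simp_rw [key]
  conv_lhs => rw [← MonoidAlgebra.sum_coeff_single f]
  rfl

lemma geom_pow_poly (k : ℕ) :
    (Polynomial.X - 1 : Polynomial (ZMod p)) ^ (p ^ k - 1)
      = ∑ j ∈ range (p ^ k), (Polynomial.X : Polynomial (ZMod p)) ^ j := by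
  haveI : Fact (1 < p) := ⟨(Fact.out : p.Prime).one_lt⟩
  have hX : (Polynomial.X - 1 : Polynomial (ZMod p)) ≠ 0 := by
    rw [← Polynomial.C_1]
    exact Polynomial.X_sub_C_ne_zero 1
  apply mul_right_cancel₀ hX
  rw [geom_sum_mul, ← pow_succ,
    Nat.sub_add_cancel (Nat.one_le_pow _ _ (Fact.out : p.Prime).pos)]
  have := sub_pow_char_pow (R := Polynomial (ZMod p)) (p := p) Polynomial.X 1 (n := k)
  simpa using this

lemma keyB {n : ℕ} (σ : Γ) (horder : orderOf σ = p ^ n) :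
    ((single σ (1 : ZMod p) : MonoidAlgebra (ZMod p) Γ) - 1) ^ (p ^ n - 1) ≠ 0 := by
  classical
  haveI : Fact (1 < p) := ⟨(Fact.out : p.Prime).one_lt⟩
  set m := p ^ n - 1 with hm
  have hmN : m + 1 = p ^ n := Nat.sub_add_cancel (Nat.one_le_pow _ _ (Fact.out : p.Prime).pos)
  intro h
  have h1 := congrArg (fun f : MonoidAlgebra (ZMod p) Γ => f.coeff 1) h
  rw [sub_pow] at h1
  have hterm : ∀ k, ((-1 : MonoidAlgebra (ZMod p) Γ) ^ (k + m) * single σ (1 : ZMod p) ^ k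
      * 1 ^ (m - k) * (m.choose k : MonoidAlgebra (ZMod p) Γ))
      = single (σ ^ k) ((-1 : ZMod p) ^ (k + m) * (m.choose k : ZMod p)) := by
    intro k
    have hneg : (-1 : MonoidAlgebra (ZMod p) Γ) = single (1 : Γ) (-1 : ZMod p) := by
      rw [MonoidAlgebra.one_def, ← MonoidAlgebra.single_neg]
    rw [one_pow, mul_one, hneg, MonoidAlgebra.single_pow, MonoidAlgebra.single_pow,
      MonoidAlgebra.natCast_def, MonoidAlgebra.single_mul_single,
      MonoidAlgebra.single_mul_single]
    simp
  simp_rw [hterm] at h1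
  rw [MonoidAlgebra.coeff_sum, Finsupp.finset_sum_apply] at h1
  simp_rw [MonoidAlgebra.coeff_single, Finsupp.single_apply] at h1
  rw [Finset.sum_eq_single 0] at h1
  · simp only [pow_zero, Nat.choose_zero_right, Nat.cast_one, mul_one, zero_add, if_pos rfl] at h1
    exact (IsUnit.pow m (isUnit_one.neg)).ne_zero h1
  · intro k hk hk0
    rw [if_neg]
    intro hσk
    have : p ^ n ∣ k := horder ▸ orderOf_dvd_of_pow_eq_one hσk
    rw [Finset.mem_range] at hk
    exact hk0 (Nat.eq_zero_of_dvd_of_lt this (by omega))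
  · intro h0
    exact absurd (Finset.mem_range.mpr (by omega)) h0

end aux


set_option maxHeartbeats 2000000 in
/-- Let `Γ` be a cyclic group of order `p ^ n` with generator `σ`, `R = ℤ_p[Γ]`, and let
`M_{a,b}` be the ideal of `R` generated by `p^a` and `σ^{p^c} - 1` (for `b ≥ 1`; for `b = 0` the
ideal generated by `σ^{p^{n-a}} - 1`), where `a ≥ 1`, `a + b ≤ n` and `c = n - (a + b)`.  Then the
`𝔽_p[Γ]`-module `M_{a,b}/p·M_{a,b}` has no direct summand isomorphic to `𝔽_p[Γ]`. -/
theorem quotient_mod_p_no_free_summand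
    (p : ℕ) [Fact p.Prime] (hodd : p ≠ 2) (n : ℕ) (hn : 1 ≤ n)
    (Γ : Type) [CommGroup Γ] (σ : Γ)
    (hcard : Nat.card Γ = p ^ n) (hgen : ∀ g : Γ, g ∈ Subgroup.zpowers σ)
    (a b : ℕ) (ha : 1 ≤ a) (hab : a + b ≤ n) (c : ℕ) (hc : c = n - (a + b))
    (M : Ideal (MonoidAlgebra ℤ_[p] Γ))
    (hM : M = if b = 0 then
        Ideal.span {MonoidAlgebra.of ℤ_[p] Γ (σ ^ p ^ c) - 1}
      else
        Ideal.span {(p : MonoidAlgebra ℤ_[p] Γ) ^ a, MonoidAlgebra.of ℤ_[p] Γ (σ ^ p ^ c) - 1}) :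
    ¬ ∃ (A B : Submodule (MonoidAlgebra ℤ_[p] Γ)
        (M ⧸ LinearMap.range (p • (LinearMap.id : M →ₗ[MonoidAlgebra ℤ_[p] Γ] M)))),
        IsCompl A B ∧
          Nonempty (A ≃ₗ[MonoidAlgebra ℤ_[p] Γ] FpGroupRing p Γ) := by
  classical
  have hp : p.Prime := Fact.out
  haveI : Fact (1 < p) := ⟨hp.one_lt⟩
  have hfin : Finite Γ := Nat.finite_of_card_ne_zero (by rw [hcard]; exact pow_ne_zero n hp.pos.ne')
  have horder : orderOf σ = p ^ n := by
    rw [← Nat.card_zpowers, (Subgroup.eq_top_iff' _).mpr hgen, Subgroup.card_top, hcard]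
  set R := MonoidAlgebra ℤ_[p] Γ with hR
  set S := MonoidAlgebra (ZMod p) Γ with hS
  set φ := groupRingHom (PadicInt.toZMod (p := p)) (MonoidHom.id Γ) with hφdef
  haveI hcharS : CharP S p := by
    refine charP_of_injective_algebraMap (R := ZMod p) ?_ p
    rw [MonoidAlgebra.coe_algebraMap]
    exact (MonoidAlgebra.single_right_injective (m := (1 : Γ))).comp (algebraMap (ZMod p) (ZMod p)).injective
  set t : R := MonoidAlgebra.of ℤ_[p] Γ σ with ht
  set x : R := t - 1 with hxdef
  have hcn : c < n := by omega
  have hd1 : 1 ≤ p ^ c := Nat.one_le_pow _ _ hp.pos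
  have hdN : p ^ c < p ^ n := Nat.pow_lt_pow_right hp.one_lt hcn
  have hdm : p ^ c * p ^ (n - c) = p ^ n := by rw [← pow_add]; congr 1; omega
  have hm1 : 1 ≤ p ^ (n - c) := Nat.one_le_pow _ _ hp.pos
  set τ : R := t ^ p ^ c - 1 with hτ
  set ν : R := ∑ j ∈ Finset.range (p ^ (n - c)), (t ^ p ^ c) ^ j with hν
  have htN : t ^ p ^ n = 1 := by
    rw [ht, ← map_pow, ← horder, pow_orderOf_eq_one, map_one]
  have hτν : τ * ν = 0 := by
    rw [hτ, hν, mul_comm, geom_sum_mul, ← pow_mul, hdm, htN, sub_self]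
  -- images under φ
  have hφt : φ t = single σ (1 : ZMod p) := by
    rw [ht, MonoidAlgebra.of_apply, grh_single, map_one]
  set ξ : S := single σ (1 : ZMod p) - 1 with hξ
  have hφx : φ x = ξ := by rw [hxdef, map_sub, map_one, hφt]
  have hfrob : ξ ^ p ^ c = single σ (1 : ZMod p) ^ p ^ c - 1 := by
    rw [hξ, sub_pow_char_pow, one_pow]
  have hφτ : φ τ = single σ (1 : ZMod p) ^ p ^ c - 1 := by
    rw [hτ, map_sub, map_pow, map_one, hφt]
  have hφν : φ ν = ∑ j ∈ Finset.range (p ^ (n - c)), (single σ (1 : ZMod p) ^ p ^ c) ^ j := by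
    rw [hν, map_sum]
    refine Finset.sum_congr rfl fun j _ => ?_
    rw [map_pow, map_pow, hφt]
  -- the geometric identity mod p
  have hgeom : (single σ (1 : ZMod p) ^ p ^ c - 1) ^ (p ^ (n - c) - 1)
      = ∑ j ∈ Finset.range (p ^ (n - c)), (single σ (1 : ZMod p) ^ p ^ c) ^ j := by
    have hpoly := geom_pow_poly (p := p) (n - c)
    have := congrArg (Polynomial.aeval (single σ (1 : ZMod p) ^ p ^ c : S)) hpoly
    simpa [map_sub, map_pow, map_sum] using this
  have harith : p ^ n - p ^ c = p ^ c * (p ^ (n - c) - 1) := by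
    rw [Nat.mul_sub, mul_one, hdm]
  have hS3 : ∃ w, x ^ (p ^ n - p ^ c) = ν + (p : R) * w := by
    obtain ⟨w, hw⟩ := grh_ker (f := x ^ (p ^ n - p ^ c) - ν) (by
      rw [map_sub, map_pow, hφx, hφν, harith, pow_mul, hfrob, hgeom, sub_self])
    exact ⟨w, by linear_combination hw⟩
  have hS4 : ∃ u, x ^ p ^ c = τ + (p : R) * u := by
    obtain ⟨u, hu⟩ := grh_ker (f := x ^ p ^ c - τ) (by
      rw [map_sub, map_pow, hφx, hφτ, hfrob, sub_self])
    exact ⟨u, by linear_combination hu⟩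
  obtain ⟨w, hw⟩ := hS3
  obtain ⟨u, hu⟩ := hS4
  set θ : R := x ^ (p ^ n - 1) with hθ
  -- key multiplication facts
  have hkey2 : ∀ r : R, ∃ y, θ * (r * τ) = (p : R) * (y * τ) := by
    intro r
    refine ⟨r * x ^ (p ^ c - 1) * w, ?_⟩
    have hsplit : x ^ (p ^ n - 1) = x ^ (p ^ n - p ^ c) * x ^ (p ^ c - 1) := by
      rw [← pow_add]; congr 1; omega
    rw [hθ, hsplit, hw]
    linear_combination (x ^ (p ^ c - 1) * r) * hτν
  have hkey1 : ∀ r : R, ∃ y1 y2,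
      θ * (r * (p : R) ^ a) = (p : R) * (y1 * τ + y2 * (p : R) ^ a) := by
    intro r
    have hsplit : x ^ (p ^ n - 1) = x ^ p ^ c * x ^ (p ^ n - 1 - p ^ c) := by
      rw [← pow_add]; congr 1; omega
    have hpa : (p : R) ^ a = (p : R) * (p : R) ^ (a - 1) := by
      rw [← pow_succ']; congr 1; omega
    refine ⟨r * x ^ (p ^ n - 1 - p ^ c) * (p : R) ^ (a - 1), r * x ^ (p ^ n - 1 - p ^ c) * u, ?_⟩
    rw [hθ, hsplit, hu]
    linear_combination (x ^ (p ^ n - 1 - p ^ c) * r * τ) * hpa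
  -- generator of M
  have hgen0 : MonoidAlgebra.of ℤ_[p] Γ (σ ^ p ^ c) - 1 = τ := by
    rw [hτ, ht, map_pow]
  have hmain : ∀ r ∈ M, ∃ y ∈ M, θ * r = (p : R) * y := by
    intro r hr
    by_cases hb : b = 0
    · rw [hM, if_pos hb, hgen0] at hr
      have hτM : τ ∈ M := by
        rw [hM, if_pos hb, hgen0]; exact Ideal.subset_span rfl
      obtain ⟨r1, rfl⟩ := Ideal.mem_span_singleton'.mp hr
      obtain ⟨y, hy⟩ := hkey2 r1
      exact ⟨y * τ, Ideal.mul_mem_left _ _ hτM, hy⟩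
    · rw [hM, if_neg hb, hgen0] at hr
      have hτM : τ ∈ M := by
        rw [hM, if_neg hb, hgen0]
        exact Ideal.subset_span (by simp)
      have hpM : (p : R) ^ a ∈ M := by
        rw [hM, if_neg hb, hgen0]
        exact Ideal.subset_span (by simp)
      obtain ⟨r1, r2, rfl⟩ := Ideal.mem_span_pair.mp hr
      obtain ⟨y1, y2, hy12⟩ := hkey1 r1
      obtain ⟨y3, hy3⟩ := hkey2 r2
      refine ⟨y1 * τ + y2 * (p : R) ^ a + y3 * τ, ?_, ?_⟩
      · exact add_mem (add_mem (Ideal.mul_mem_left _ _ hτM) (Ideal.mul_mem_left _ _ hpM))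
          (Ideal.mul_mem_left _ _ hτM)
      · linear_combination hy12 + hy3
  -- pass to the quotient
  rintro ⟨A, B, -, ⟨e⟩⟩
  have hzero : ∀ q : (M ⧸ LinearMap.range (p • (LinearMap.id : M →ₗ[R] M))), θ • q = 0 := by
    intro q
    obtain ⟨z, rfl⟩ := Submodule.Quotient.mk_surjective _ q
    rw [← Submodule.Quotient.mk_smul, Submodule.Quotient.mk_eq_zero]
    obtain ⟨r, hr⟩ := z
    obtain ⟨y, hyM, hEq⟩ := hmain r hr
    refine ⟨⟨y, hyM⟩, ?_⟩
    apply Subtype.ext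
    simp only [LinearMap.smul_apply, LinearMap.id_apply, SetLike.val_smul, smul_eq_mul]
    simp [hEq, nsmul_eq_mul]
  set o : FpGroupRing p Γ := (1 : MonoidAlgebra (ZMod p) Γ) with ho
  have hv0 : θ • (e.symm o) = 0 := by
    apply Subtype.ext
    rw [Submodule.coe_smul]
    exact hzero _
  have h2 : θ • o = 0 := by
    have h3 := congrArg e hv0
    rwa [map_smul, e.apply_symm_apply, show e 0 = 0 from e.toLinearMap.map_zero] at h3
  have h3 : φ θ = 0 := by
    have h4 : θ • o = φ θ * (1 : MonoidAlgebra (ZMod p) Γ) := rfl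
    rw [h4, mul_one] at h2
    exact h2
  rw [hθ, map_pow, hφx] at h3
  exact keyB σ horder h3
end

section
/- For every odd prime p, there exist infinitely many prime numbers q such that q ≡ 1 (mod p), q ≢ 1 (mod p²), and p is not a p-th power modulo q (i.e., there is no integer x with x^p ≡ p (mod q)). -/
private lemma list_prod_modeq_one {m : ℕ} : ∀ l : List ℕ,
    (∀ q ∈ l, q ≡ 1 [MOD m]) → l.prod ≡ 1 [MOD m]
  | [], _ => by simp [Nat.ModEq.refl]
  | (a :: l), h => by
    have h1 := h a (List.mem_cons_self)
    have h2 := list_prod_modeq_one l fun q hq => h q (List.mem_cons_of_mem a hq)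
    simpa using h1.mul h2

/-- For every odd prime `p`, there are infinitely many primes `q` with `q ≡ 1 (mod p)`,
`q ≢ 1 (mod p²)`, and such that `p` is not a `p`-th power modulo `q`. -/
theorem infinite_primes_q_cong_one_not_pth_power
    (p : ℕ) (hp : p.Prime) (hodd : p ≠ 2) :
    {q : ℕ | q.Prime ∧ q ≡ 1 [MOD p] ∧ ¬ q ≡ 1 [MOD p ^ 2] ∧
      ¬ ∃ x : ℤ, x ^ p ≡ (p : ℤ) [ZMOD (q : ℤ)]}.Infinite := by
  haveI : Fact p.Prime := ⟨hp⟩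
  have hp2 : 2 ≤ p := hp.two_le
  obtain ⟨k, hk⟩ : ∃ k, p = k + 2 := ⟨p - 2, by omega⟩
  apply Set.infinite_of_forall_exists_gt
  intro n
  set F : Finset ℕ := (Finset.range (n+1)).filter (fun r => r.Prime ∧ r ≠ p) with hF
  set t : ℕ := ∏ r ∈ F, r with htdef
  have htpos : 0 < t :=
    Finset.prod_pos fun r hr => ((Finset.mem_filter.mp hr).2.1).pos
  have hpt : ¬ p ∣ t := by
    rw [← hp.coprime_iff_not_dvd]
    exact Nat.Coprime.prod_right fun r hr =>
      (Nat.coprime_primes hp (Finset.mem_filter.mp hr).2.1).mpr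
        (Ne.symm (Finset.mem_filter.mp hr).2.2)
  set y : ℕ := p * t ^ p with hydef
  have hpy : p ∣ y := dvd_mul_right p (t ^ p)
  have hty : t ∣ y := (dvd_pow_self t hp.pos.ne').mul_left p
  have hy1 : 0 < y := Nat.mul_pos hp.pos (pow_pos htpos p)
  set S : ℕ := ∑ i ∈ Finset.range k, y ^ (i + 1 + 1) with hSdef
  have hyS : y ∣ S := Finset.dvd_sum fun i _ => dvd_pow_self y (by omega)
  have hp2S : p ^ 2 ∣ S := Finset.dvd_sum fun i _ => by
    calc p ^ 2 ∣ y ^ 2 := pow_dvd_pow_of_dvd hpy 2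
    _ ∣ y ^ (i + 1 + 1) := pow_dvd_pow y (by omega)
  set M : ℕ := S + y + 1 with hMdef
  have hM1 : 1 < M := by omega
  have hMsum : (∑ i ∈ Finset.range p, (y : ℤ) ^ i) = (M : ℤ) := by
    rw [hk, Finset.sum_range_succ', Finset.sum_range_succ', hMdef, hSdef]
    push_cast
    ring
  -- small divisors of M
  have hdiv1 : ∀ d : ℕ, d ∣ y → d ∣ M → d ∣ 1 := by
    intro d hdy hdM
    have h1 : d ∣ S + y := Nat.dvd_add (hdy.trans hyS) hdy
    have h2 := Nat.dvd_sub hdM h1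
    have h3 : M - (S + y) = 1 := by omega
    rwa [h3] at h2
  -- M ≢ 1 mod p^2
  have hM1p2 : ¬ M ≡ 1 [MOD p ^ 2] := by
    intro h
    have h1 : p ^ 2 ∣ M - 1 := (Nat.modEq_iff_dvd' (by omega)).mp h.symm
    have h2 : M - 1 = S + y := by omega
    rw [h2] at h1
    have h3 : p ^ 2 ∣ y := by simpa using Nat.dvd_sub h1 hp2S
    have h4 : p ∣ t ^ p := by
      obtain ⟨c, hc⟩ := h3
      refine ⟨c, Nat.eq_of_mul_eq_mul_left hp.pos ?_⟩
      rw [← hydef, hc]; ring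
    exact hpt (hp.dvd_of_dvd_pow h4)
  -- find a prime divisor q of M with q ≢ 1 mod p^2
  have hM0 : M ≠ 0 := by omega
  obtain ⟨q, hqp, hqM, hq2⟩ : ∃ q, q.Prime ∧ q ∣ M ∧ ¬ q ≡ 1 [MOD p ^ 2] := by
    by_contra hcon
    push_neg at hcon
    have h1 : M.primeFactorsList.prod ≡ 1 [MOD p ^ 2] :=
      list_prod_modeq_one _ fun q hq =>
        hcon q (Nat.prime_of_mem_primeFactorsList hq) (Nat.dvd_of_mem_primeFactorsList hq)
    rw [Nat.prod_primeFactorsList hM0] at h1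
    exact hM1p2 h1
  haveI : Fact q.Prime := ⟨hqp⟩
  -- q does not divide y, hence q ≠ p, q ∤ t
  have hqy : ¬ q ∣ y := fun h => by
    have := Nat.le_of_dvd one_pos (hdiv1 q h hqM)
    have := hqp.two_le
    omega
  have hqnep : q ≠ p := fun h => hqy (h ▸ hpy)
  have hqt : ¬ q ∣ t := fun h => hqy (h.trans hty)
  have hqn : n < q := by
    by_contra hle
    push_neg at hle
    exact hqt (Finset.dvd_prod_of_mem _
      (Finset.mem_filter.mpr ⟨Finset.mem_range.mpr (by omega), hqp, hqnep⟩))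
  -- work in ZMod q
  have hq0 : (y : ZMod q) ≠ 0 := fun h =>
    hqy ((ZMod.natCast_eq_zero_iff y q).mp h)
  have hyp1 : (y : ZMod q) ^ p = 1 := by
    have h1 : (q : ℤ) ∣ (y : ℤ) ^ p - 1 := by
      have h2 : (M : ℤ) * ((y : ℤ) - 1) = (y : ℤ) ^ p - 1 := by
        rw [← hMsum]; exact geom_sum_mul _ _
      exact h2 ▸ (Int.natCast_dvd_natCast.mpr hqM).mul_right _
    have h3 := (ZMod.intCast_zmod_eq_zero_iff_dvd _ q).mpr h1
    rwa [Int.cast_sub, Int.cast_pow, Int.cast_natCast, Int.cast_one, sub_eq_zero] at h3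
  have hyne1 : (y : ZMod q) ≠ 1 := by
    intro h
    have h1 : (M : ZMod q) = 0 := (ZMod.natCast_eq_zero_iff M q).mpr hqM
    have h2 : (M : ZMod q) = (S : ZMod q) + (y : ZMod q) + 1 := by
      rw [hMdef, Nat.cast_add, Nat.cast_add, Nat.cast_one]
    have h3 : (S : ZMod q) = ∑ i ∈ Finset.range k, (y : ZMod q) ^ (i + 1 + 1) := by
      rw [hSdef, Nat.cast_sum]
      simp [Nat.cast_pow]
    rw [h] at h3
    simp only [one_pow, Finset.sum_const, Finset.card_range, nsmul_eq_mul, mul_one] at h3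
    have h4 : ((p : ℕ) : ZMod q) = 0 := by
      rw [hk, ← h1, h2, h3, h]
      push_cast
      ring
    have h5 : q ∣ p := (ZMod.natCast_eq_zero_iff p q).mp h4
    exact hqnep ((Nat.prime_dvd_prime_iff_eq hqp hp).mp h5)
  have hord : orderOf (y : ZMod q) = p := orderOf_eq_prime hyp1 hyne1
  have hpq1 : p ∣ q - 1 := by
    have hu : IsUnit (y : ZMod q) := isUnit_iff_ne_zero.mpr hq0
    have h1 : orderOf hu.unit = p := by rw [← orderOf_units, hu.unit_spec, hord]
    have h2 := orderOf_dvd_card (x := hu.unit)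
    rwa [ZMod.card_units q, h1] at h2
  have hqmod : q ≡ 1 [MOD p] := ((Nat.modEq_iff_dvd' hqp.one_lt.le).mpr hpq1).symm
  refine ⟨q, ⟨hqp, hqmod, hq2, ?_⟩, hqn⟩
  rintro ⟨x, hx⟩
  have hxz : ((x : ZMod q)) ^ p = (p : ZMod q) := by
    have h1 := (ZMod.intCast_eq_intCast_iff (x ^ p) (p : ℤ) q).mpr hx
    push_cast at h1
    exact h1
  set z : ZMod q := (x : ZMod q) * (t : ZMod q) with hzdef
  have hzp : z ^ p = (y : ZMod q) := by
    rw [hzdef, mul_pow, hxz, hydef]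
    push_cast
    ring
  have hz0 : z ≠ 0 := fun h => hq0 (by rw [← hzp, h, zero_pow hp.pos.ne'])
  obtain ⟨m, hm⟩ := hpq1
  have hym1 : (y : ZMod q) ^ m = 1 := by
    calc (y : ZMod q) ^ m = z ^ (p * m) := by rw [pow_mul, hzp]
    _ = z ^ (q - 1) := by rw [← hm]
    _ = 1 := ZMod.pow_card_sub_one_eq_one hz0
  have hpm : p ∣ m := hord ▸ orderOf_dvd_of_pow_eq_one hym1
  have hfin : p ^ 2 ∣ q - 1 := by
    rw [hm, pow_two]
    exact mul_dvd_mul_left p hpm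
  exact hq2 ((Nat.modEq_iff_dvd' hqp.one_lt.le).mpr hfin).symm
end
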